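/- arXiv:1506.08520 — 3 statements merged into one kernel-verified Lean document; each statement's English description precedes it below -/
import Mathlib

section
/- Let T > 0 and let u : [0,T] × [0,1] → ℝ be a C² function satisfying the one-dimensional wave equation ∂ₜ²u = ∂ₓ²u on [0,T] × [0,1] together with the Dirichlet boundary conditions u(t,0) = u(t,1) = 0 for all t ∈ [0,T]. Then (1/2)∫₀ᵀ (∂ₓu(t,1))² dt = [∫₀¹ ∂ₜu(t,x) · x·∂ₓu(t,x) dx]ₜ₌₀^{t=T} + (1/2)∫₀ᵀ∫₀¹ [(∂ₜu)² + (∂ₓu)²](t,x) dx dt, where [F(t)]ₜ₌₀^{t=T} denotes F(T) − F(0). -/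
/-!
Multiply the wave equation by the multiplier `x ∂ₓu`. Using the wave equation and the symmetry of
second derivatives, the plane field `(-2 ∂ₜu · x ∂ₓu, x ((∂ₜu)² + (∂ₓu)²))` in the variables
`(t, x)` has divergence `(∂ₜu)² + (∂ₓu)²`. The divergence theorem on `[0,T] × [0,1]` then yields the
identity: the side `x = 0` contributes nothing because of the weight `x`, and on the side `x = 1`
the Dirichlet condition forces `∂ₜu = 0`, leaving only `(∂ₓu)²`.
-/

open Set MeasureTheory Function

section PartialDerivatives

variable {E : Type*} [NormedAddCommGroup E] [NormedSpace ℝ E]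

theorem HasFDerivAt.hasDerivAt_fst_slice {f : ℝ × ℝ → E} {f' : ℝ × ℝ →L[ℝ] E} {t x : ℝ}
    (h : HasFDerivAt f f' (t, x)) : HasDerivAt (fun s => f (s, x)) (f' (1, 0)) t :=
  h.comp_hasDerivAt t ((hasDerivAt_id t).prodMk (hasDerivAt_const t x))

theorem HasFDerivAt.hasDerivAt_snd_slice {f : ℝ × ℝ → E} {f' : ℝ × ℝ →L[ℝ] E} {t x : ℝ}
    (h : HasFDerivAt f f' (t, x)) : HasDerivAt (fun z => f (t, z)) (f' (0, 1)) x :=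
  h.comp_hasDerivAt x ((hasDerivAt_const x t).prodMk (hasDerivAt_id x))

theorem DifferentiableAt.deriv_eq_zero_of_eqOn_Icc {f : ℝ → E} {a b t : ℝ}
    (hf : DifferentiableAt ℝ f t) (hab : a < b) (ht : t ∈ Icc a b) (h : EqOn f 0 (Icc a b)) :
    deriv f t = 0 := by
  rw [← hf.derivWithin (uniqueDiffOn_Icc hab t ht), derivWithin_congr h (h ht)]
  exact congrFun (derivWithin_zero _) t

noncomputable def partialFst (u : ℝ → ℝ → E) (t x : ℝ) : E := deriv (fun s => u s x) t

noncomputable def partialSnd (u : ℝ → ℝ → E) (t x : ℝ) : E := deriv (fun z => u t z) x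

variable {u : ℝ → ℝ → E} {t x : ℝ}

theorem partialFst_eq_fderiv (h : DifferentiableAt ℝ (uncurry u) (t, x)) :
    partialFst u t x = fderiv ℝ (uncurry u) (t, x) (1, 0) :=
  h.hasFDerivAt.hasDerivAt_fst_slice.deriv

theorem partialSnd_eq_fderiv (h : DifferentiableAt ℝ (uncurry u) (t, x)) :
    partialSnd u t x = fderiv ℝ (uncurry u) (t, x) (0, 1) :=
  h.hasFDerivAt.hasDerivAt_snd_slice.deriv

theorem hasDerivAt_partialFst (h : DifferentiableAt ℝ (uncurry u) (t, x)) :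
    HasDerivAt (fun s => u s x) (partialFst u t x) t :=
  h.hasFDerivAt.hasDerivAt_fst_slice.differentiableAt.hasDerivAt

theorem hasDerivAt_partialSnd (h : DifferentiableAt ℝ (uncurry u) (t, x)) :
    HasDerivAt (fun z => u t z) (partialSnd u t x) x :=
  h.hasFDerivAt.hasDerivAt_snd_slice.differentiableAt.hasDerivAt

theorem contDiff_partialFst {n : WithTop ℕ∞} (hu : ContDiff ℝ (n + 1) (uncurry u)) :
    ContDiff ℝ n (uncurry (partialFst u)) := by
  have hd := hu.differentiable (by simp)
  have h : uncurry (partialFst u) = fun p => fderiv ℝ (uncurry u) p (1, 0) :=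
    funext fun p => partialFst_eq_fderiv (hd p)
  rw [h]
  exact (hu.fderiv_right le_rfl).clm_apply contDiff_const

theorem contDiff_partialSnd {n : WithTop ℕ∞} (hu : ContDiff ℝ (n + 1) (uncurry u)) :
    ContDiff ℝ n (uncurry (partialSnd u)) := by
  have hd := hu.differentiable (by simp)
  have h : uncurry (partialSnd u) = fun p => fderiv ℝ (uncurry u) p (0, 1) :=
    funext fun p => partialSnd_eq_fderiv (hd p)
  rw [h]
  exact (hu.fderiv_right le_rfl).clm_apply contDiff_const

theorem partialFst_partialSnd (hu : ContDiff ℝ 2 (uncurry u)) (t x : ℝ) :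
    partialFst (partialSnd u) t x = partialSnd (partialFst u) t x := by
  have hd := hu.differentiable two_ne_zero
  have hd' := (hu.fderiv_right (m := 1) le_rfl).differentiable one_ne_zero (t, x)
  have hFst := hd'.hasFDerivAt.hasDerivAt_fst_slice.clm_apply
    (hasDerivAt_const t ((0 : ℝ), (1 : ℝ)))
  have hSnd := hd'.hasFDerivAt.hasDerivAt_snd_slice.clm_apply
    (hasDerivAt_const x ((1 : ℝ), (0 : ℝ)))
  simp only [map_zero, add_zero] at hFst hSnd
  have hw : (fun s => partialSnd u s x) = fun s => fderiv ℝ (uncurry u) (s, x) (0, 1) :=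
    funext fun s => partialSnd_eq_fderiv (hd _)
  have hv : (fun z => partialFst u t z) = fun z => fderiv ℝ (uncurry u) (t, z) (1, 0) :=
    funext fun z => partialFst_eq_fderiv (hd _)
  rw [partialFst, partialSnd, hw, hv, hFst.deriv, hSnd.deriv]
  exact (hu.contDiffAt.isSymmSndFDerivAt (by simp)) _ _

theorem integral_integral_partialFst_add_partialSnd [CompleteSpace E] {F G : ℝ → ℝ → E}
    (hF : ContDiff ℝ 1 (uncurry F)) (hG : ContDiff ℝ 1 (uncurry G)) (a₁ b₁ a₂ b₂ : ℝ) :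
    ∫ t in a₁..b₁, ∫ x in a₂..b₂, (partialFst F t x + partialSnd G t x) =
      (((∫ t in a₁..b₁, G t b₂) - ∫ t in a₁..b₁, G t a₂) + ∫ x in a₂..b₂, F b₁ x)
        - ∫ x in a₂..b₂, F a₁ x := by
  have hdF := hF.differentiable one_ne_zero
  have hdG := hG.differentiable one_ne_zero
  have hF' : partialFst F = fun t x => fderiv ℝ (uncurry F) (t, x) (1, 0) :=
    funext₂ fun t x => partialFst_eq_fderiv (hdF _)
  have hG' : partialSnd G = fun t x => fderiv ℝ (uncurry G) (t, x) (0, 1) :=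
    funext₂ fun t x => partialSnd_eq_fderiv (hdG _)
  have hdiv :
      Continuous fun p => fderiv ℝ (uncurry F) p (1, 0) + fderiv ℝ (uncurry G) p (0, 1) :=
    ((hF.continuous_fderiv one_ne_zero).clm_apply continuous_const).add
      ((hG.continuous_fderiv one_ne_zero).clm_apply continuous_const)
  rw [hF', hG']
  exact integral2_divergence_prod_of_hasFDerivAt (uncurry F) (uncurry G) _ _ a₁ a₂ b₁ b₂
    hF.continuous.continuousOn hG.continuous.continuousOn
    (fun p _ => (hdF p).hasFDerivAt) (fun p _ => (hdG p).hasFDerivAt)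
    (hdiv.continuousOn.integrableOn_compact (isCompact_uIcc.prod isCompact_uIcc))

end PartialDerivatives

section WaveEquation

variable {u : ℝ → ℝ → ℝ}

noncomputable def multiplierTerm (u : ℝ → ℝ → ℝ) (t x : ℝ) : ℝ :=
  partialFst u t x * (x * partialSnd u t x)

noncomputable def energyDensity (u : ℝ → ℝ → ℝ) (t x : ℝ) : ℝ :=
  partialFst u t x ^ 2 + partialSnd u t x ^ 2

theorem contDiff_multiplierTerm (hu : ContDiff ℝ 2 (uncurry u)) :
    ContDiff ℝ 1 (uncurry (multiplierTerm u)) :=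
  (contDiff_partialFst hu).mul (contDiff_snd.mul (contDiff_partialSnd hu))

theorem contDiff_energyDensity (hu : ContDiff ℝ 2 (uncurry u)) :
    ContDiff ℝ 1 (uncurry (energyDensity u)) :=
  ((contDiff_partialFst hu).pow 2).add ((contDiff_partialSnd hu).pow 2)

theorem partialFst_add_partialSnd_multiplier_eq_energyDensity (hu : ContDiff ℝ 2 (uncurry u))
    {t x : ℝ}
    (hwave : partialFst (partialFst u) t x = partialSnd (partialSnd u) t x) :
    partialFst (fun t x => -(2 * multiplierTerm u t x)) t x
      + partialSnd (fun t x => x * energyDensity u t x) t x = energyDensity u t x := by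
  have hv := (contDiff_partialFst (n := 1) hu).differentiable one_ne_zero
  have hw := (contDiff_partialSnd (n := 1) hu).differentiable one_ne_zero
  have hFst := (((hasDerivAt_partialFst (hv (t, x))).fun_mul
    ((hasDerivAt_partialFst (hw (t, x))).const_mul x)).const_mul 2).fun_neg
  have hSnd := (hasDerivAt_id' x).fun_mul
    (((hasDerivAt_partialSnd (hv (t, x))).fun_pow 2).fun_add
      ((hasDerivAt_partialSnd (hw (t, x))).fun_pow 2))
  rw [partialFst, partialSnd]
  simp only [multiplierTerm, energyDensity]
  rw [hFst.deriv, hSnd.deriv, hwave, partialFst_partialSnd hu]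
  ring

end WaveEquation

theorem wave_multiplier_identity_general
    (T : ℝ) (hT : 0 < T) (u : ℝ → ℝ → ℝ)
    (hu : ContDiff ℝ 2 (fun p : ℝ × ℝ => u p.1 p.2))
    (hwave : ∀ t ∈ Icc (0:ℝ) T, ∀ x ∈ Icc (0:ℝ) 1,
      deriv (fun s => deriv (fun s' => u s' x) s) t
        = deriv (fun z => deriv (fun z' => u t z') z) x)
    (hbc1 : ∀ t ∈ Icc (0:ℝ) T, u t 1 = 0) :
    1 / 2 * ∫ t in (0:ℝ)..T, (deriv (fun z => u t z) 1) ^ 2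
      = ((∫ x in (0:ℝ)..1, deriv (fun s => u s x) T * (x * deriv (fun z => u T z) x))
          - ∫ x in (0:ℝ)..1, deriv (fun s => u s x) 0 * (x * deriv (fun z => u 0 z) x))
        + 1 / 2 * ∫ t in (0:ℝ)..T, ∫ x in (0:ℝ)..1,
            ((deriv (fun s => u s x) t) ^ 2 + (deriv (fun z => u t z) x) ^ 2) := by
  have hF : ContDiff ℝ 1 (uncurry fun t x => -(2 * multiplierTerm u t x)) :=
    (contDiff_const.mul (contDiff_multiplierTerm hu)).neg
  have hG : ContDiff ℝ 1 (uncurry fun t x => x * energyDensity u t x) :=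
    contDiff_snd.mul (contDiff_energyDensity hu)
  have hdiv := integral_integral_partialFst_add_partialSnd hF hG 0 T 0 1
  have hbulk : ∫ t in (0:ℝ)..T, ∫ x in (0:ℝ)..1,
      (partialFst (fun t x => -(2 * multiplierTerm u t x)) t x
        + partialSnd (fun t x => x * energyDensity u t x) t x)
      = ∫ t in (0:ℝ)..T, ∫ x in (0:ℝ)..1, energyDensity u t x := by
    refine intervalIntegral.integral_congr fun t ht =>
      intervalIntegral.integral_congr fun x hx => ?_
    rw [uIcc_of_le hT.le] at ht
    rw [uIcc_of_le zero_le_one] at hx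
    exact partialFst_add_partialSnd_multiplier_eq_energyDensity hu (hwave t ht x hx)
  have hedge :
      EqOn (fun t => 1 * energyDensity u t 1) (fun t => partialSnd u t 1 ^ 2) (uIcc 0 T) := by
    intro t ht
    rw [uIcc_of_le hT.le] at ht
    have hv1 : partialFst u t 1 = 0 :=
      (hasDerivAt_partialFst (hu.differentiable two_ne_zero (t, 1))).differentiableAt
        |>.deriv_eq_zero_of_eqOn_Icc hT ht hbc1
    simp [energyDensity, hv1]
  rw [hbulk, intervalIntegral.integral_congr hedge] at hdiv
  simp only [zero_mul, intervalIntegral.integral_zero, intervalIntegral.integral_neg,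
    intervalIntegral.integral_const_mul, multiplierTerm, energyDensity, partialFst,
    partialSnd] at hdiv
  linarith

/-- multiplier identity for the 1D wave equation with Dirichlet
boundary conditions on `[0,T] × [0,1]`. Here `deriv (fun s => u s x) t` is the
time derivative `∂ₜu(t,x)` and `deriv (fun z => u t z) x` is `∂ₓu(t,x)`. -/
theorem wave_multiplier_identity
    (T : ℝ) (hT : 0 < T) (u : ℝ → ℝ → ℝ)
    (hu : ContDiff ℝ 2 (fun p : ℝ × ℝ => u p.1 p.2))
    (hwave : ∀ t ∈ Icc (0:ℝ) T, ∀ x ∈ Icc (0:ℝ) 1,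
      deriv (fun s => deriv (fun s' => u s' x) s) t
        = deriv (fun z => deriv (fun z' => u t z') z) x)
    (hbc0 : ∀ t ∈ Icc (0:ℝ) T, u t 0 = 0)
    (hbc1 : ∀ t ∈ Icc (0:ℝ) T, u t 1 = 0) :
    1 / 2 * ∫ t in (0:ℝ)..T, (deriv (fun z => u t z) 1) ^ 2
      = ((∫ x in (0:ℝ)..1, deriv (fun s => u s x) T * (x * deriv (fun z => u T z) x))
          - ∫ x in (0:ℝ)..1, deriv (fun s => u s x) 0 * (x * deriv (fun z => u 0 z) x))
        + 1 / 2 * ∫ t in (0:ℝ)..T, ∫ x in (0:ℝ)..1,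
            ((deriv (fun s => u s x) t) ^ 2 + (deriv (fun z => u t z) x) ^ 2) :=
  wave_multiplier_identity_general T hT u hu hwave hbc1
end

section
/- Let (η, ϕ) be a smooth solution of the two-dimensional water-wave system on [0,T]. Then L₁∫₀ᵀ Θ(t,L₁) dt = (T/2)·𝓗 + (L₁/2)∫₀ᵀ∫₋ₕ^{m(t)} (∂_yϕ(t,L₁,y))² dy dt + (1/2)∫₀ᵀ∫₀^{L₁} (h + (7/4)η(t,x))·(∂ₓϕ(t,x,−h))² dx dt − (1/4)[∫₀^{L₁} η(t,x)ψ(t,x) dx]ₜ₌₀^{t=T} − [∫₀^{L₁} x·η(t,x)·∂ₓψ(t,x) dx]ₜ₌₀^{t=T} − (7/4)∫₀ᵀ∬_{Ω(t)} (∂ₓη)(∂ₓϕ)(∂_yϕ) dx dy dt, where 𝓗 := 𝓗(0) (the energy 𝓗(t) being independent of t) and [F(t)]ₜ₌₀^{t=T} denotes F(T) − F(0). -/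
open Real Set MeasureTheory

noncomputable section

/-- `∂ₓϕ(t,x,y)` -/
def phiX (ϕ : ℝ → ℝ → ℝ → ℝ) (t x y : ℝ) : ℝ := deriv (fun x' => ϕ t x' y) x

/-- `∂_yϕ(t,x,y)` -/
def phiY (ϕ : ℝ → ℝ → ℝ → ℝ) (t x y : ℝ) : ℝ := deriv (fun y' => ϕ t x y') y

/-- `∂ₜϕ(t,x,y)` -/
def phiT (ϕ : ℝ → ℝ → ℝ → ℝ) (t x y : ℝ) : ℝ := deriv (fun s => ϕ s x y) t

/-- `∂ₓη(t,x)` -/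
def etaX (η : ℝ → ℝ → ℝ) (t x : ℝ) : ℝ := deriv (fun x' => η t x') x

/-- `∂ₜη(t,x)` -/
def etaT (η : ℝ → ℝ → ℝ) (t x : ℝ) : ℝ := deriv (fun s => η s x) t

/-- the trace `ψ(t,x) = ϕ(t,x,η(t,x))` -/
def psi (η : ℝ → ℝ → ℝ) (ϕ : ℝ → ℝ → ℝ → ℝ) (t x : ℝ) : ℝ := ϕ t x (η t x)

/-- `∂ₜψ(t,x)` -/
def psiT (η : ℝ → ℝ → ℝ) (ϕ : ℝ → ℝ → ℝ → ℝ) (t x : ℝ) : ℝ :=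
  deriv (fun s => psi η ϕ s x) t

/-- `∂ₓψ(t,x)` -/
def psiX (η : ℝ → ℝ → ℝ) (ϕ : ℝ → ℝ → ℝ → ℝ) (t x : ℝ) : ℝ :=
  deriv (fun x' => psi η ϕ t x') x

/-- `Θ(t,x) = -η ∂ₜψ - (g/2) η²` -/
def Theta (g : ℝ) (η : ℝ → ℝ → ℝ) (ϕ : ℝ → ℝ → ℝ → ℝ) (t x : ℝ) : ℝ :=
  -(η t x) * psiT η ϕ t x - g / 2 * (η t x) ^ 2

/-- the energy `𝓗(t)` -/
def energy2D (L₁ h g : ℝ) (η : ℝ → ℝ → ℝ) (ϕ : ℝ → ℝ → ℝ → ℝ) (t : ℝ) : ℝ :=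
  g / 2 * (∫ x in (0:ℝ)..L₁, (η t x) ^ 2)
    + 1 / 2 * ∫ x in (0:ℝ)..L₁, ∫ y in (-h)..(η t x),
        ((phiX ϕ t x y) ^ 2 + (phiY ϕ t x y) ^ 2)

/-- A smooth solution of the two-dimensional water-wave system on `[0,T]`:
`η : [0,T] × [0,L₁] → ℝ` and `ϕ` on the fluid domain (both given as smooth total
functions), satisfying the incompressibility, boundary, kinematic and Bernoulli
(dynamic) conditions, together with `η ≥ -h/2`, zero mean, and the right-angle
contact conditions `∂ₓη(t,0) = ∂ₓη(t,L₁) = 0`. -/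
structure IsWW2D (L₁ h g T : ℝ) (η : ℝ → ℝ → ℝ) (ϕ : ℝ → ℝ → ℝ → ℝ) : Prop where
  smooth_eta : ContDiff ℝ (⊤ : ℕ∞) (fun p : ℝ × ℝ => η p.1 p.2)
  smooth_phi : ContDiff ℝ (⊤ : ℕ∞) (fun p : ℝ × ℝ × ℝ => ϕ p.1 p.2.1 p.2.2)
  eta_lower : ∀ t ∈ Icc (0:ℝ) T, ∀ x ∈ Icc (0:ℝ) L₁, -h / 2 ≤ η t x
  eta_mean : ∀ t ∈ Icc (0:ℝ) T, (∫ x in (0:ℝ)..L₁, η t x) = 0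
  laplace : ∀ t ∈ Icc (0:ℝ) T, ∀ x ∈ Icc (0:ℝ) L₁, ∀ y ∈ Icc (-h) (η t x),
    deriv (fun x' => phiX ϕ t x' y) x + deriv (fun y' => phiY ϕ t x y') y = 0
  bc_left : ∀ t ∈ Icc (0:ℝ) T, ∀ y ∈ Icc (-h) (η t 0), phiX ϕ t 0 y = 0
  bc_right : ∀ t ∈ Icc (0:ℝ) T, ∀ y ∈ Icc (-h) (η t L₁), phiX ϕ t L₁ y = 0
  bc_bottom : ∀ t ∈ Icc (0:ℝ) T, ∀ x ∈ Icc (0:ℝ) L₁, phiY ϕ t x (-h) = 0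
  kinematic : ∀ t ∈ Icc (0:ℝ) T, ∀ x ∈ Icc (0:ℝ) L₁,
    etaT η t x = phiY ϕ t x (η t x) - etaX η t x * phiX ϕ t x (η t x)
  bernoulli : ∀ t ∈ Icc (0:ℝ) T, ∀ x ∈ Icc (0:ℝ) L₁,
    phiT ϕ t x (η t x)
      + 1 / 2 * ((phiX ϕ t x (η t x)) ^ 2 + (phiY ϕ t x (η t x)) ^ 2) + g * η t x = 0
  etaX_left : ∀ t ∈ Icc (0:ℝ) T, etaX η t 0 = 0
  etaX_right : ∀ t ∈ Icc (0:ℝ) T, etaX η t L₁ = 0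

/-!
Fix a time `t`. Green's identity for `ϕ ∇ϕ` together with the kinematic condition gives
`∬ |∇ϕ|² = ∫ ∂ₜη ψ`; for `∂ₜϕ ∇ϕ` it gives `∬ ∇ϕ·∇∂ₜϕ = ∫ ∂ₜη ∂ₜϕ|_{y=η}`, so that by
Bernoulli's law the energy `𝓗` is conserved. The divergence theorem for a Rellich field with
multiplier `(x, y - 7η/4)` expresses a quadratic surface integral through the wall term at
`x = L₁`, the bottom term and the bulk term `∬ ∂ₓη ∂ₓϕ ∂_yϕ`. Differentiating
`V(t) = ¼ ∫ η ψ + ∫ x η ∂ₓψ` in time, substituting the kinematic and Bernoulli conditions and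
integrating by parts in `x` turns `V'(t)` into
`½ 𝓗 + (wall) + (bottom) - (7/4) (bulk) - L₁ Θ(t, L₁)`; integrating over `[0, T]` gives the
identity.
-/

open intervalIntegral Filter
open scoped ContDiff

section PartialDerivatives

variable {P : Type*} [NormedAddCommGroup P] [NormedSpace ℝ P] {f : P → ℝ → ℝ}

@[fun_prop]
theorem contDiff_deriv_param {n : WithTop ℕ∞} (hf : ContDiff ℝ (n + 1) ↿f) {g : P → ℝ}
    (hg : ContDiff ℝ n g) : ContDiff ℝ n fun p => deriv (f p) (g p) := by
  simp only [← fderiv_apply_one_eq_deriv]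
  exact (hf.fderiv hg le_rfl).clm_apply contDiff_const

-- Stated for `C^∞` so that `fun_prop` does not have to guess a smoothness order.
@[fun_prop]
theorem continuous_deriv_param (hf : ContDiff ℝ ∞ ↿f) {g : P → ℝ} (hg : Continuous g) :
    Continuous fun p => deriv (f p) (g p) := by
  have hf' : ContDiff ℝ ∞ fun r : (P × ℝ) × ℝ => f r.1.1 r.2 :=
    hf.comp ((contDiff_fst.comp contDiff_fst).prodMk contDiff_snd)
  exact (contDiff_deriv_param (n := ∞) (f := fun q : P × ℝ => f q.1) hf'
    contDiff_snd).continuous.comp (continuous_id.prodMk hg)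

theorem continuous_uncurry_deriv_fst {F : ℝ → ℝ → ℝ} (hF : ContDiff ℝ 1 ↿F) :
    Continuous ↿fun x y => deriv (fun x' => F x' y) x :=
  (contDiff_deriv_param (n := 0) (f := fun (p : ℝ × ℝ) x' => F x' p.2)
    (hF.comp (contDiff_snd.prodMk (contDiff_snd.comp contDiff_fst))) contDiff_fst).continuous

theorem continuous_uncurry_deriv_snd {F : ℝ → ℝ → ℝ} (hF : ContDiff ℝ 1 ↿F) :
    Continuous ↿fun x y => deriv (F x) y :=
  (contDiff_deriv_param (n := 0) (f := fun (p : ℝ × ℝ) y' => F p.1 y')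
    (hF.comp ((contDiff_fst.comp contDiff_fst).prodMk contDiff_snd)) contDiff_snd).continuous

theorem deriv_deriv_comm {f : ℝ → ℝ → ℝ} (hf : ContDiff ℝ 2 ↿f) (a b : ℝ) :
    deriv (fun a' => deriv (f a') b) a = deriv (fun b' => deriv (fun a' => f a' b') a) b := by
  set D := fderiv ℝ ↿f
  have hdiff : Differentiable ℝ ↿f := hf.differentiable (by simp)
  have hD : Differentiable ℝ D :=
    (hf.fderiv_right (m := 1) (by norm_num)).differentiable one_ne_zero
  have hcurve : ∀ {c : ℝ → ℝ × ℝ} {v : ℝ × ℝ} {s : ℝ} (w : ℝ × ℝ), HasDerivAt c v s →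
      HasDerivAt (fun s' => D (c s') w) (fderiv ℝ D (c s) v w) s := fun w hc => by
    simpa using ((hD _).hasFDerivAt.comp_hasDerivAt _ hc).clm_apply (hasDerivAt_const _ w)
  have h₁ : ∀ a' b', deriv (fun a'' => f a'' b') a' = D (a', b') (1, 0) := fun a' b' =>
    ((hdiff _).hasFDerivAt.comp_hasDerivAt a'
      ((hasDerivAt_id a').prodMk (hasDerivAt_const a' b'))).deriv
  have h₂ : ∀ a' b', deriv (f a') b' = D (a', b') (0, 1) := fun a' b' =>
    ((hdiff _).hasFDerivAt.comp_hasDerivAt b'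
      ((hasDerivAt_const b' a').prodMk (hasDerivAt_id b'))).deriv
  simp only [h₁, h₂]
  rw [(hcurve (0, 1) ((hasDerivAt_id' a).prodMk (hasDerivAt_const a b))).deriv,
    (hcurve (1, 0) ((hasDerivAt_const b a).prodMk (hasDerivAt_id' b))).deriv]
  exact (hf.contDiffAt.isSymmSndFDerivAt (by simp)) (1, 0) (0, 1)

end PartialDerivatives

section ParametricIntegrals

variable {f f' : ℝ → ℝ → ℝ}

theorem hasDerivAt_integral_param {a b t₀ : ℝ} (hf : Continuous ↿f) (hf' : Continuous ↿f')
    (hd : ∀ t x, HasDerivAt (fun s => f s x) (f' t x) t) :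
    HasDerivAt (fun t => ∫ x in a..b, f t x) (∫ x in a..b, f' t₀ x) t₀ := by
  obtain ⟨M, hM⟩ := ((isCompact_closedBall t₀ 1).prod isCompact_uIcc).exists_bound_of_continuousOn
    (hf'.continuousOn (s := Metric.closedBall t₀ 1 ×ˢ uIcc a b))
  refine (hasDerivAt_integral_of_dominated_loc_of_deriv_le (bound := fun _ => M)
    (Metric.ball_mem_nhds t₀ one_pos)
    (Eventually.of_forall fun t => (hf.comp (Continuous.prodMk_right t)).aestronglyMeasurable)
    ((hf.comp (Continuous.prodMk_right t₀)).intervalIntegrable a b)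
    (hf'.comp (Continuous.prodMk_right t₀)).aestronglyMeasurable ?_ intervalIntegrable_const
    (Eventually.of_forall fun x _ t _ => hd t x)).2
  exact Eventually.of_forall fun x hx t ht =>
    hM (t, x) ⟨Metric.ball_subset_closedBall ht, uIoc_subset_uIcc hx⟩

theorem hasDerivAt_integral_param_upper {v : ℝ → ℝ} {v' c t₀ : ℝ} (hf : Continuous ↿f)
    (hf' : Continuous ↿f') (hd : ∀ t x, HasDerivAt (fun s => f s x) (f' t x) t)
    (hv : HasDerivAt v v' t₀) :
    HasDerivAt (fun t => ∫ y in c..v t, f t y)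
      ((∫ y in c..v t₀, f' t₀ y) + v' * f t₀ (v t₀)) t₀ := by
  have hΦ := hasStrictFDerivAt_uncurry_coprod (u := (t₀, v t₀))
    (f := fun t b => ∫ y in c..b, f t y)
    (f₁ := fun t b => (1 : ℝ →L[ℝ] ℝ).smulRight (∫ y in c..b, f' t y))
    (f₂ := fun t b => (1 : ℝ →L[ℝ] ℝ).smulRight (f t b))
    (Eventually.of_forall fun q => (hasDerivAt_integral_param hf hf' hd).hasFDerivAt)
    (Eventually.of_forall fun q =>
      ((hf.comp (Continuous.prodMk_right q.1)).integral_hasStrictDerivAt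
        c q.2).hasDerivAt.hasFDerivAt)
    ((ContinuousLinearMap.smulRightL ℝ ℝ ℝ 1).continuous.comp
      (f := fun q : ℝ × ℝ => ∫ y in c..q.2, f' q.1 y) (by fun_prop)).continuousAt
    ((ContinuousLinearMap.smulRightL ℝ ℝ ℝ 1).continuous.comp hf).continuousAt
  refine (hΦ.hasFDerivAt.comp_hasDerivAt t₀ ((hasDerivAt_id' t₀).prodMk hv)).congr_deriv ?_
  simp [Function.HasUncurry.uncurry]

end ParametricIntegrals

section Subgraph

variable {e : ℝ → ℝ} {a b c : ℝ}

theorem integral_eq_zero_of_forall_mem_Icc {F : ℝ → ℝ} (hab : a ≤ b)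
    (h : ∀ x ∈ Icc a b, F x = 0) : ∫ x in a..b, F x = 0 := by
  rw [integral_congr (g := 0) fun x hx => h x (uIcc_of_le hab ▸ hx)]
  simp

theorem integral_subgraph_congr {F G : ℝ → ℝ → ℝ} (hab : a ≤ b)
    (hce : ∀ x ∈ Icc a b, c ≤ e x) (h : ∀ x ∈ Icc a b, ∀ y ∈ Icc c (e x), F x y = G x y) :
    ∫ x in a..b, ∫ y in c..e x, F x y = ∫ x in a..b, ∫ y in c..e x, G x y :=
  integral_congr fun x hx => integral_congr fun y hy => by
    rw [uIcc_of_le hab] at hx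
    rw [uIcc_of_le (hce x hx)] at hy
    exact h x hx y hy

theorem integral_subgraph_divergence {F₁ F₂ div : ℝ → ℝ → ℝ} (hF₁ : ContDiff ℝ 1 ↿F₁)
    (hF₂ : ContDiff ℝ 1 ↿F₂) (he : ContDiff ℝ 1 e) (hab : a ≤ b)
    (hce : ∀ x ∈ Icc a b, c ≤ e x)
    (hdiv : ∀ x ∈ Icc a b, ∀ y ∈ Icc c (e x),
      deriv (fun x' => F₁ x' y) x + deriv (F₂ x) y = div x y) :
    ∫ x in a..b, ∫ y in c..e x, div x y
      = (∫ x in a..b, (F₂ x (e x) - F₂ x c - deriv e x * F₁ x (e x)))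
        + (∫ y in c..e b, F₁ b y) - ∫ y in c..e a, F₁ a y := by
  have cF₁ := hF₁.continuous
  have cF₁x := continuous_uncurry_deriv_fst hF₁
  have cF₂ := hF₂.continuous
  have cF₂y := continuous_uncurry_deriv_snd hF₂
  have ce := he.continuous
  have ce' := he.continuous_deriv le_rfl
  have hQ : ∀ x, HasDerivAt (fun x => ∫ y in c..e x, F₁ x y)
      ((∫ y in c..e x, deriv (fun x' => F₁ x' y) x) + deriv e x * F₁ x (e x)) x := fun x =>
    hasDerivAt_integral_param_upper cF₁ cF₁x
      (fun x y => ((hF₁.differentiable one_ne_zero).comp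
        (differentiable_id.prodMk (differentiable_const y)) x).hasDerivAt)
      (he.differentiable one_ne_zero x).hasDerivAt
  have hinner : ∀ x, ∫ y in c..e x, (deriv (fun x' => F₁ x' y) x + deriv (F₂ x) y)
      = (∫ y in c..e x, deriv (fun x' => F₁ x' y) x) + (F₂ x (e x) - F₂ x c) := fun x => by
    have c₁ : Continuous fun y => deriv (fun x' => F₁ x' y) x := cF₁x.comp (.prodMk_right x)
    have c₂ : Continuous fun y => deriv (F₂ x) y := cF₂y.comp (.prodMk_right x)
    rw [intervalIntegral.integral_add (c₁.intervalIntegrable _ _) (c₂.intervalIntegrable _ _),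
      integral_deriv_eq_sub (f := F₂ x) (fun y _ => ((hF₂.differentiable one_ne_zero).comp
        ((differentiable_const x).prodMk differentiable_id) y)) (c₂.intervalIntegrable _ _)]
  calc ∫ x in a..b, ∫ y in c..e x, div x y
      = ∫ x in a..b, (((∫ y in c..e x, deriv (fun x' => F₁ x' y) x) + deriv e x * F₁ x (e x))
          + (F₂ x (e x) - F₂ x c - deriv e x * F₁ x (e x))) := by
        rw [← integral_subgraph_congr hab hce hdiv]
        exact integral_congr fun x _ => by rw [hinner]; ring
    _ = _ := by
        rw [intervalIntegral.integral_add ((by fun_prop : Continuous _).intervalIntegrable _ _)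
            ((by fun_prop : Continuous _).intervalIntegrable _ _),
          integral_eq_sub_of_hasDerivAt (fun x _ => hQ x)
            ((by fun_prop : Continuous _).intervalIntegrable _ _)]
        ring

end Subgraph

section SmoothPartials

variable {u : ℝ → ℝ → ℝ → ℝ} {w : ℝ → ℝ → ℝ}

theorem hasDerivAt_phiT (hu : ContDiff ℝ ∞ fun p : ℝ × ℝ × ℝ => u p.1 p.2.1 p.2.2) (t x y : ℝ) :
    HasDerivAt (fun s => u s x y) (phiT u t x y) t :=
  ((by fun_prop (disch := simp) : Differentiable ℝ fun s => u s x y) t).hasDerivAt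

theorem hasDerivAt_phiX (hu : ContDiff ℝ ∞ fun p : ℝ × ℝ × ℝ => u p.1 p.2.1 p.2.2) (t x y : ℝ) :
    HasDerivAt (fun x' => u t x' y) (phiX u t x y) x :=
  ((by fun_prop (disch := simp) : Differentiable ℝ fun x' => u t x' y) x).hasDerivAt

theorem hasDerivAt_phiY (hu : ContDiff ℝ ∞ fun p : ℝ × ℝ × ℝ => u p.1 p.2.1 p.2.2) (t x y : ℝ) :
    HasDerivAt (fun y' => u t x y') (phiY u t x y) y :=
  ((by fun_prop (disch := simp) : Differentiable ℝ fun y' => u t x y') y).hasDerivAt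

@[fun_prop]
theorem contDiff_phiT (hu : ContDiff ℝ ∞ fun p : ℝ × ℝ × ℝ => u p.1 p.2.1 p.2.2) :
    ContDiff ℝ ∞ fun p : ℝ × ℝ × ℝ => phiT u p.1 p.2.1 p.2.2 := by
  unfold phiT; fun_prop

@[fun_prop]
theorem contDiff_phiX (hu : ContDiff ℝ ∞ fun p : ℝ × ℝ × ℝ => u p.1 p.2.1 p.2.2) :
    ContDiff ℝ ∞ fun p : ℝ × ℝ × ℝ => phiX u p.1 p.2.1 p.2.2 := by
  unfold phiX; fun_prop

@[fun_prop]
theorem contDiff_phiY (hu : ContDiff ℝ ∞ fun p : ℝ × ℝ × ℝ => u p.1 p.2.1 p.2.2) :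
    ContDiff ℝ ∞ fun p : ℝ × ℝ × ℝ => phiY u p.1 p.2.1 p.2.2 := by
  unfold phiY; fun_prop

theorem phiX_phiY_comm (hu : ContDiff ℝ ∞ fun p : ℝ × ℝ × ℝ => u p.1 p.2.1 p.2.2) (t x y : ℝ) :
    phiX (phiY u) t x y = phiY (phiX u) t x y :=
  deriv_deriv_comm (contDiff_infty.1 (by fun_prop : ContDiff ℝ ∞ fun p : ℝ × ℝ => u t p.1 p.2) 2)
    x y

theorem phiT_phiX_comm (hu : ContDiff ℝ ∞ fun p : ℝ × ℝ × ℝ => u p.1 p.2.1 p.2.2) (t x y : ℝ) :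
    phiT (phiX u) t x y = phiX (phiT u) t x y :=
  deriv_deriv_comm (contDiff_infty.1 (by fun_prop : ContDiff ℝ ∞ fun p : ℝ × ℝ => u p.1 p.2 y) 2)
    t x

theorem phiT_phiY_comm (hu : ContDiff ℝ ∞ fun p : ℝ × ℝ × ℝ => u p.1 p.2.1 p.2.2) (t x y : ℝ) :
    phiT (phiY u) t x y = phiY (phiT u) t x y :=
  deriv_deriv_comm (contDiff_infty.1 (by fun_prop : ContDiff ℝ ∞ fun p : ℝ × ℝ => u p.1 x p.2) 2)
    t y

theorem hasDerivAt_etaT (hw : ContDiff ℝ ∞ fun p : ℝ × ℝ => w p.1 p.2) (t x : ℝ) :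
    HasDerivAt (fun s => w s x) (etaT w t x) t :=
  ((by fun_prop (disch := simp) : Differentiable ℝ fun s => w s x) t).hasDerivAt

theorem hasDerivAt_etaX (hw : ContDiff ℝ ∞ fun p : ℝ × ℝ => w p.1 p.2) (t x : ℝ) :
    HasDerivAt (fun x' => w t x') (etaX w t x) x :=
  ((by fun_prop (disch := simp) : Differentiable ℝ fun x' => w t x') x).hasDerivAt

@[fun_prop]
theorem contDiff_etaT (hw : ContDiff ℝ ∞ fun p : ℝ × ℝ => w p.1 p.2) :
    ContDiff ℝ ∞ fun p : ℝ × ℝ => etaT w p.1 p.2 := by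
  unfold etaT; fun_prop

@[fun_prop]
theorem contDiff_etaX (hw : ContDiff ℝ ∞ fun p : ℝ × ℝ => w p.1 p.2) :
    ContDiff ℝ ∞ fun p : ℝ × ℝ => etaX w p.1 p.2 := by
  unfold etaX; fun_prop

theorem etaT_etaX_comm (hw : ContDiff ℝ ∞ fun p : ℝ × ℝ => w p.1 p.2) (t x : ℝ) :
    etaT (etaX w) t x = etaX (etaT w) t x :=
  deriv_deriv_comm (contDiff_infty.1 hw 2) t x

theorem hasDerivAt_comp_curve (hu : ContDiff ℝ ∞ fun p : ℝ × ℝ × ℝ => u p.1 p.2.1 p.2.2)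
    {a b c : ℝ → ℝ} {a' b' c' s : ℝ} (ha : HasDerivAt a a' s) (hb : HasDerivAt b b' s)
    (hc : HasDerivAt c c' s) :
    HasDerivAt (fun s => u (a s) (b s) (c s))
      (a' * phiT u (a s) (b s) (c s) + b' * phiX u (a s) (b s) (c s)
        + c' * phiY u (a s) (b s) (c s)) s := by
  set D := fderiv ℝ (fun p : ℝ × ℝ × ℝ => u p.1 p.2.1 p.2.2)
  have hD : ∀ p, HasFDerivAt (fun p : ℝ × ℝ × ℝ => u p.1 p.2.1 p.2.2) (D p) p := fun p =>
    (hu.differentiable (by simp) p).hasFDerivAt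
  have hT : phiT u (a s) (b s) (c s) = D (a s, b s, c s) (1, 0, 0) :=
    ((hD _).comp_hasDerivAt _ ((hasDerivAt_id' _).prodMk
      ((hasDerivAt_const _ _).prodMk (hasDerivAt_const _ _)))).deriv
  have hX : phiX u (a s) (b s) (c s) = D (a s, b s, c s) (0, 1, 0) :=
    ((hD _).comp_hasDerivAt _ ((hasDerivAt_const _ _).prodMk
      ((hasDerivAt_id' _).prodMk (hasDerivAt_const _ _)))).deriv
  have hY : phiY u (a s) (b s) (c s) = D (a s, b s, c s) (0, 0, 1) :=
    ((hD _).comp_hasDerivAt _ ((hasDerivAt_const _ _).prodMk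
      ((hasDerivAt_const _ _).prodMk (hasDerivAt_id' _)))).deriv
  have hv : ((a', b', c') : ℝ × ℝ × ℝ) = a' • (1, 0, 0) + b' • (0, 1, 0) + c' • (0, 0, 1) := by
    simp
  refine ((hD _).comp_hasDerivAt s (ha.prodMk (hb.prodMk hc))).congr_deriv ?_
  rw [hT, hX, hY, hv]
  simp only [map_add, map_smul, smul_eq_mul]

end SmoothPartials

section Trace

variable {η : ℝ → ℝ → ℝ} {ϕ : ℝ → ℝ → ℝ → ℝ}

@[fun_prop]
theorem contDiff_psi (hη : ContDiff ℝ ∞ fun p : ℝ × ℝ => η p.1 p.2)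
    (hϕ : ContDiff ℝ ∞ fun p : ℝ × ℝ × ℝ => ϕ p.1 p.2.1 p.2.2) :
    ContDiff ℝ ∞ fun p : ℝ × ℝ => psi η ϕ p.1 p.2 := by
  unfold psi; fun_prop

@[fun_prop]
theorem contDiff_psiT (hη : ContDiff ℝ ∞ fun p : ℝ × ℝ => η p.1 p.2)
    (hϕ : ContDiff ℝ ∞ fun p : ℝ × ℝ × ℝ => ϕ p.1 p.2.1 p.2.2) :
    ContDiff ℝ ∞ fun p : ℝ × ℝ => psiT η ϕ p.1 p.2 :=
  contDiff_etaT (contDiff_psi hη hϕ)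

@[fun_prop]
theorem contDiff_psiX (hη : ContDiff ℝ ∞ fun p : ℝ × ℝ => η p.1 p.2)
    (hϕ : ContDiff ℝ ∞ fun p : ℝ × ℝ × ℝ => ϕ p.1 p.2.1 p.2.2) :
    ContDiff ℝ ∞ fun p : ℝ × ℝ => psiX η ϕ p.1 p.2 :=
  contDiff_etaX (contDiff_psi hη hϕ)

theorem etaT_psiX_comm (hη : ContDiff ℝ ∞ fun p : ℝ × ℝ => η p.1 p.2)
    (hϕ : ContDiff ℝ ∞ fun p : ℝ × ℝ × ℝ => ϕ p.1 p.2.1 p.2.2) (t x : ℝ) :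
    etaT (psiX η ϕ) t x = etaX (psiT η ϕ) t x :=
  etaT_etaX_comm (contDiff_psi hη hϕ) t x

theorem psiT_eq (hη : ContDiff ℝ ∞ fun p : ℝ × ℝ => η p.1 p.2)
    (hϕ : ContDiff ℝ ∞ fun p : ℝ × ℝ × ℝ => ϕ p.1 p.2.1 p.2.2) (t x : ℝ) :
    psiT η ϕ t x = phiT ϕ t x (η t x) + etaT η t x * phiY ϕ t x (η t x) := by
  simpa [psiT, psi] using (hasDerivAt_comp_curve hϕ (hasDerivAt_id' t) (hasDerivAt_const t x)
    (hasDerivAt_etaT hη t x)).deriv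

theorem psiX_eq (hη : ContDiff ℝ ∞ fun p : ℝ × ℝ => η p.1 p.2)
    (hϕ : ContDiff ℝ ∞ fun p : ℝ × ℝ × ℝ => ϕ p.1 p.2.1 p.2.2) (t x : ℝ) :
    psiX η ϕ t x = phiX ϕ t x (η t x) + etaX η t x * phiY ϕ t x (η t x) := by
  simpa [psiX, psi] using (hasDerivAt_comp_curve hϕ (hasDerivAt_const x t) (hasDerivAt_id' x)
    (hasDerivAt_etaX hη t x)).deriv

end Trace

namespace IsWW2D

variable {L₁ h g T t : ℝ} {η : ℝ → ℝ → ℝ} {ϕ : ℝ → ℝ → ℝ → ℝ}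

theorem neg_le_eta (hsol : IsWW2D L₁ h g T η ϕ) (hh : 0 ≤ h) (ht : t ∈ Icc 0 T) {x : ℝ}
    (hx : x ∈ Icc 0 L₁) : -h ≤ η t x := by
  linarith [hsol.eta_lower t ht x hx]

theorem laplacian_eq_zero (hsol : IsWW2D L₁ h g T η ϕ) (ht : t ∈ Icc 0 T) {x y : ℝ}
    (hx : x ∈ Icc 0 L₁) (hy : y ∈ Icc (-h) (η t x)) :
    phiX (phiX ϕ) t x y + phiY (phiY ϕ) t x y = 0 :=
  hsol.laplace t ht x hx y hy

theorem integral_grad_mul_grad (hsol : IsWW2D L₁ h g T η ϕ) (hL : 0 ≤ L₁) (hh : 0 ≤ h)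
    (ht : t ∈ Icc 0 T) {v : ℝ → ℝ → ℝ → ℝ}
    (hv : ContDiff ℝ ∞ fun p : ℝ × ℝ × ℝ => v p.1 p.2.1 p.2.2) :
    ∫ x in 0..L₁, ∫ y in -h..η t x, (phiX ϕ t x y * phiX v t x y + phiY ϕ t x y * phiY v t x y)
      = ∫ x in 0..L₁, etaT η t x * v t x (η t x) := by
  have hϕ := hsol.smooth_phi
  have hη := hsol.smooth_eta
  rw [integral_subgraph_divergence (F₁ := fun x y => v t x y * phiX ϕ t x y)
      (F₂ := fun x y => v t x y * phiY ϕ t x y) (e := η t)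
      (contDiff_infty.1 (by fun_prop) 1) (contDiff_infty.1 (by fun_prop) 1)
      (contDiff_infty.1 (by fun_prop : ContDiff ℝ ∞ (η t)) 1) hL
      (fun x hx => hsol.neg_le_eta hh ht hx) fun x hx y hy => ?_,
    integral_eq_zero_of_forall_mem_Icc (hsol.neg_le_eta hh ht ⟨le_rfl, hL⟩)
      fun y hy => by simp [hsol.bc_left t ht y hy],
    integral_eq_zero_of_forall_mem_Icc (hsol.neg_le_eta hh ht ⟨hL, le_rfl⟩)
      fun y hy => by simp [hsol.bc_right t ht y hy], add_zero, sub_zero]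
  · refine integral_congr fun x hx => ?_
    rw [hsol.bc_bottom t ht x (uIcc_of_le hL ▸ hx), show deriv (η t) x = etaX η t x from rfl,
      hsol.kinematic t ht x (uIcc_of_le hL ▸ hx)]
    ring
  · rw [((hasDerivAt_phiX hv t x y).fun_mul (hasDerivAt_phiX (contDiff_phiX hϕ) t x y)).deriv,
      ((hasDerivAt_phiY hv t x y).fun_mul (hasDerivAt_phiY (contDiff_phiY hϕ) t x y)).deriv]
    linear_combination v t x y * hsol.laplacian_eq_zero ht hx hy

theorem integral_sq_grad (hsol : IsWW2D L₁ h g T η ϕ) (hL : 0 ≤ L₁) (hh : 0 ≤ h)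
    (ht : t ∈ Icc 0 T) :
    ∫ x in 0..L₁, ∫ y in -h..η t x, (phiX ϕ t x y ^ 2 + phiY ϕ t x y ^ 2)
      = ∫ x in 0..L₁, etaT η t x * psi η ϕ t x := by
  simp only [sq]
  exact hsol.integral_grad_mul_grad hL hh ht hsol.smooth_phi

end IsWW2D

section Energy

variable {L₁ h g T : ℝ} {η : ℝ → ℝ → ℝ} {ϕ : ℝ → ℝ → ℝ → ℝ}

theorem energy2D_eq_integral (hη : ContDiff ℝ ∞ fun p : ℝ × ℝ => η p.1 p.2)
    (hϕ : ContDiff ℝ ∞ fun p : ℝ × ℝ × ℝ => ϕ p.1 p.2.1 p.2.2) (t : ℝ) :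
    energy2D L₁ h g η ϕ t = ∫ x in 0..L₁,
      (g / 2 * η t x ^ 2 + 1 / 2 * ∫ y in -h..η t x, (phiX ϕ t x y ^ 2 + phiY ϕ t x y ^ 2)) := by
  rw [energy2D, intervalIntegral.integral_add, intervalIntegral.integral_const_mul,
    intervalIntegral.integral_const_mul]
  all_goals exact (by fun_prop : Continuous _).intervalIntegrable _ _

theorem hasDerivAt_energy2D (hη : ContDiff ℝ ∞ fun p : ℝ × ℝ => η p.1 p.2)
    (hϕ : ContDiff ℝ ∞ fun p : ℝ × ℝ × ℝ => ϕ p.1 p.2.1 p.2.2) (t : ℝ) :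
    HasDerivAt (energy2D L₁ h g η ϕ) (∫ x in 0..L₁,
      (etaT η t x * (g * η t x + 1 / 2 * (phiX ϕ t x (η t x) ^ 2 + phiY ϕ t x (η t x) ^ 2))
        + ∫ y in -h..η t x,
          (phiX ϕ t x y * phiT (phiX ϕ) t x y + phiY ϕ t x y * phiT (phiY ϕ) t x y))) t := by
  have hϕx := contDiff_phiX hϕ
  have hϕy := contDiff_phiY hϕ
  have hd : ∀ s x, HasDerivAt (fun s => g / 2 * η s x ^ 2
        + 1 / 2 * ∫ y in -h..η s x, (phiX ϕ s x y ^ 2 + phiY ϕ s x y ^ 2))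
      (etaT η s x * (g * η s x + 1 / 2 * (phiX ϕ s x (η s x) ^ 2 + phiY ϕ s x (η s x) ^ 2))
        + ∫ y in -h..η s x,
          (phiX ϕ s x y * phiT (phiX ϕ) s x y + phiY ϕ s x y * phiT (phiY ϕ) s x y)) s := by
    intro s x
    have hkin := hasDerivAt_integral_param_upper (c := -h)
      (f := fun s y => phiX ϕ s x y ^ 2 + phiY ϕ s x y ^ 2)
      (f' := fun s y => 2 * (phiX ϕ s x y * phiT (phiX ϕ) s x y
        + phiY ϕ s x y * phiT (phiY ϕ) s x y))
      (by fun_prop) (by fun_prop)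
      (fun s y => (((hasDerivAt_phiT hϕx s x y).fun_pow 2).fun_add
        ((hasDerivAt_phiT hϕy s x y).fun_pow 2)).congr_deriv (by push_cast; ring))
      (hasDerivAt_etaT hη s x)
    refine ((((hasDerivAt_etaT hη s x).fun_pow 2).const_mul (g / 2)).add
      (hkin.const_mul (1 / 2))).congr_deriv ?_
    rw [intervalIntegral.integral_const_mul]
    push_cast
    ring
  rw [funext (energy2D_eq_integral hη hϕ)]
  exact hasDerivAt_integral_param (by fun_prop) (by fun_prop) hd

theorem IsWW2D.energy_rate_eq_zero (hsol : IsWW2D L₁ h g T η ϕ) (hL : 0 ≤ L₁) (hh : 0 ≤ h)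
    {t : ℝ} (ht : t ∈ Icc 0 T) :
    ∫ x in 0..L₁,
      (etaT η t x * (g * η t x + 1 / 2 * (phiX ϕ t x (η t x) ^ 2 + phiY ϕ t x (η t x) ^ 2))
        + ∫ y in -h..η t x,
          (phiX ϕ t x y * phiT (phiX ϕ) t x y + phiY ϕ t x y * phiT (phiY ϕ) t x y)) = 0 := by
  have hϕ := hsol.smooth_phi
  have hη := hsol.smooth_eta
  have hbulk : ∫ x in 0..L₁, ∫ y in -h..η t x,
      (phiX ϕ t x y * phiT (phiX ϕ) t x y + phiY ϕ t x y * phiT (phiY ϕ) t x y)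
      = ∫ x in 0..L₁, etaT η t x * phiT ϕ t x (η t x) := by
    simp only [phiT_phiX_comm hϕ, phiT_phiY_comm hϕ]
    exact hsol.integral_grad_mul_grad hL hh ht (contDiff_phiT hϕ)
  rw [intervalIntegral.integral_add ((by fun_prop : Continuous _).intervalIntegrable _ _)
      ((by fun_prop : Continuous _).intervalIntegrable _ _), hbulk,
    ← intervalIntegral.integral_add ((by fun_prop : Continuous _).intervalIntegrable _ _)
      ((by fun_prop : Continuous _).intervalIntegrable _ _)]
  exact integral_eq_zero_of_forall_mem_Icc hL fun x hx => by
    linear_combination etaT η t x * hsol.bernoulli t ht x hx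

theorem IsWW2D.energy2D_eq_energy2D_zero (hsol : IsWW2D L₁ h g T η ϕ) (hL : 0 ≤ L₁)
    (hh : 0 ≤ h) {t : ℝ} (ht : t ∈ Icc 0 T) :
    energy2D L₁ h g η ϕ t = energy2D L₁ h g η ϕ 0 := by
  have hE := hasDerivAt_energy2D (L₁ := L₁) (h := h) (g := g) hsol.smooth_eta hsol.smooth_phi
  refine constant_of_has_deriv_right_zero (fun s _ => (hE s).continuousAt.continuousWithinAt)
    (fun s hs => ?_) t ht
  rw [← hsol.energy_rate_eq_zero hL hh (Ico_subset_Icc_self hs)]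
  exact (hE s).hasDerivWithinAt

end Energy

section Rellich

variable {L₁ h g T t : ℝ} {η : ℝ → ℝ → ℝ} {ϕ : ℝ → ℝ → ℝ → ℝ}

/-- `(rellichX, rellichY)` is the Rellich field `(m·∇ϕ) ∇ϕ - |∇ϕ|² m / 2` with multiplier
`m = (x, y - 7η/4)`; for harmonic `ϕ` its divergence is `-(7/4) ∂ₓη ∂ₓϕ ∂_yϕ`. -/
def rellichX (η : ℝ → ℝ → ℝ) (ϕ : ℝ → ℝ → ℝ → ℝ) (t x y : ℝ) : ℝ :=
  x * (phiX ϕ t x y ^ 2 - phiY ϕ t x y ^ 2) / 2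
    + (y - 7 / 4 * η t x) * (phiX ϕ t x y * phiY ϕ t x y)

def rellichY (η : ℝ → ℝ → ℝ) (ϕ : ℝ → ℝ → ℝ → ℝ) (t x y : ℝ) : ℝ :=
  x * (phiX ϕ t x y * phiY ϕ t x y)
    + (y - 7 / 4 * η t x) * (phiY ϕ t x y ^ 2 - phiX ϕ t x y ^ 2) / 2

theorem IsWW2D.rellich_divergence (hsol : IsWW2D L₁ h g T η ϕ) (ht : t ∈ Icc 0 T) {x y : ℝ}
    (hx : x ∈ Icc 0 L₁) (hy : y ∈ Icc (-h) (η t x)) :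
    deriv (fun x' => rellichX η ϕ t x' y) x + deriv (rellichY η ϕ t x) y
      = -(7 / 4) * (etaX η t x * phiX ϕ t x y * phiY ϕ t x y) := by
  have hϕ := hsol.smooth_phi
  have ha := hasDerivAt_phiX (contDiff_phiX hϕ) t x y
  have hb := hasDerivAt_phiX (contDiff_phiY hϕ) t x y
  have ha' := hasDerivAt_phiY (contDiff_phiX hϕ) t x y
  have hb' := hasDerivAt_phiY (contDiff_phiY hϕ) t x y
  unfold rellichX rellichY
  rw [((((hasDerivAt_id' x).fun_mul ((ha.fun_pow 2).fun_sub (hb.fun_pow 2))).div_const 2).fun_add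
      (((hasDerivAt_const x y).fun_sub ((hasDerivAt_etaX hsol.smooth_eta t x).const_mul
        (7 / 4))).fun_mul (ha.fun_mul hb))).deriv,
    (((hasDerivAt_const y x).fun_mul (ha'.fun_mul hb')).fun_add
      ((((hasDerivAt_id' y).fun_sub (hasDerivAt_const y (7 / 4 * η t x))).fun_mul
        ((hb'.fun_pow 2).fun_sub (ha'.fun_pow 2))).div_const 2)).deriv]
  linear_combination
    (x * phiX ϕ t x y + (y - 7 / 4 * η t x) * phiY ϕ t x y) * hsol.laplacian_eq_zero ht hx hy
      + ((y - 7 / 4 * η t x) * phiX ϕ t x y - x * phiY ϕ t x y) * phiX_phiY_comm hϕ t x y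

theorem IsWW2D.integral_rellich_surface (hsol : IsWW2D L₁ h g T η ϕ) (hL : 0 ≤ L₁)
    (hh : 0 ≤ h) (ht : t ∈ Icc 0 T) :
    ∫ x in 0..L₁, (x * (phiX ϕ t x (η t x) * phiY ϕ t x (η t x))
        + x * etaX η t x * (phiY ϕ t x (η t x) ^ 2 - phiX ϕ t x (η t x) ^ 2) / 2
        + 3 / 8 * η t x * (phiX ϕ t x (η t x) ^ 2 - phiY ϕ t x (η t x) ^ 2)
        + 3 / 4 * η t x * etaX η t x * (phiX ϕ t x (η t x) * phiY ϕ t x (η t x)))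
      = L₁ / 2 * (∫ y in -h..η t L₁, phiY ϕ t L₁ y ^ 2)
        + 1 / 2 * (∫ x in 0..L₁, (h + 7 / 4 * η t x) * phiX ϕ t x (-h) ^ 2)
        - 7 / 4 * ∫ x in 0..L₁, ∫ y in -h..η t x, etaX η t x * phiX ϕ t x y * phiY ϕ t x y := by
  have hϕ := hsol.smooth_phi
  have hη := hsol.smooth_eta
  have hG := integral_subgraph_divergence (F₁ := rellichX η ϕ t) (F₂ := rellichY η ϕ t)
    (contDiff_infty.1 (by unfold rellichX; fun_prop) 1)
    (contDiff_infty.1 (by unfold rellichY; fun_prop) 1)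
    (contDiff_infty.1 (by fun_prop : ContDiff ℝ ∞ (η t)) 1) hL
    (fun x hx => hsol.neg_le_eta hh ht hx) fun x hx y hy => hsol.rellich_divergence ht hx hy
  have hwallL : ∫ y in -h..η t 0, rellichX η ϕ t 0 y = 0 :=
    integral_eq_zero_of_forall_mem_Icc (hsol.neg_le_eta hh ht ⟨le_rfl, hL⟩)
      fun y hy => by simp [rellichX, hsol.bc_left t ht y hy]
  have hwallR : ∫ y in -h..η t L₁, rellichX η ϕ t L₁ y
      = -(L₁ / 2 * ∫ y in -h..η t L₁, phiY ϕ t L₁ y ^ 2) := by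
    rw [← intervalIntegral.integral_const_mul, ← intervalIntegral.integral_neg]
    refine integral_congr fun y hy => ?_
    rw [rellichX, hsol.bc_right t ht y (uIcc_of_le (hsol.neg_le_eta hh ht ⟨hL, le_rfl⟩) ▸ hy)]
    ring
  have hsurf : ∫ x in 0..L₁, (rellichY η ϕ t x (η t x) - rellichY η ϕ t x (-h)
      - deriv (η t) x * rellichX η ϕ t x (η t x))
      = ∫ x in 0..L₁, ((x * (phiX ϕ t x (η t x) * phiY ϕ t x (η t x))
        + x * etaX η t x * (phiY ϕ t x (η t x) ^ 2 - phiX ϕ t x (η t x) ^ 2) / 2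
        + 3 / 8 * η t x * (phiX ϕ t x (η t x) ^ 2 - phiY ϕ t x (η t x) ^ 2)
        + 3 / 4 * η t x * etaX η t x * (phiX ϕ t x (η t x) * phiY ϕ t x (η t x)))
        - 1 / 2 * ((h + 7 / 4 * η t x) * phiX ϕ t x (-h) ^ 2)) := by
    refine integral_congr fun x hx => ?_
    rw [rellichX, rellichY, rellichY, hsol.bc_bottom t ht x (uIcc_of_le hL ▸ hx),
      show deriv (η t) x = etaX η t x from rfl]
    ring
  simp only [intervalIntegral.integral_const_mul] at hG
  rw [hwallL, hwallR, hsurf, intervalIntegral.integral_sub, intervalIntegral.integral_const_mul]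
    at hG
  · linarith
  all_goals exact (by fun_prop : Continuous _).intervalIntegrable _ _

end Rellich

section Virial

variable {L₁ h g T t : ℝ} {η : ℝ → ℝ → ℝ} {ϕ : ℝ → ℝ → ℝ → ℝ}

theorem hasDerivAt_virial (hη : ContDiff ℝ ∞ fun p : ℝ × ℝ => η p.1 p.2)
    (hϕ : ContDiff ℝ ∞ fun p : ℝ × ℝ × ℝ => ϕ p.1 p.2.1 p.2.2) (L₁ t : ℝ) :
    HasDerivAt (fun s => 1 / 4 * (∫ x in 0..L₁, η s x * psi η ϕ s x)
        + ∫ x in 0..L₁, x * η s x * psiX η ϕ s x)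
      (∫ x in 0..L₁, (1 / 4 * (etaT η t x * psi η ϕ t x + η t x * psiT η ϕ t x)
        + (x * etaT η t x * psiX η ϕ t x + x * η t x * etaX (psiT η ϕ) t x))) t := by
  have hψ := contDiff_psi hη hϕ
  have h₁ : ∀ s x, HasDerivAt (fun s => η s x * psi η ϕ s x)
      (etaT η s x * psi η ϕ s x + η s x * psiT η ϕ s x) s := fun s x =>
    (hasDerivAt_etaT hη s x).mul (hasDerivAt_etaT hψ s x)
  have h₂ : ∀ s x, HasDerivAt (fun s => x * η s x * psiX η ϕ s x)
      (x * etaT η s x * psiX η ϕ s x + x * η s x * etaX (psiT η ϕ) s x) s := fun s x =>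
    (((hasDerivAt_etaT hη s x).const_mul x).mul
      (hasDerivAt_etaT (contDiff_psiX hη hϕ) s x)).congr_deriv
      (by rw [etaT_psiX_comm hη hϕ])
  refine (((hasDerivAt_integral_param (by fun_prop) (by fun_prop) h₁).const_mul (1 / 4)).add
    (hasDerivAt_integral_param (by fun_prop) (by fun_prop) h₂)).congr_deriv ?_
  rw [← intervalIntegral.integral_const_mul, ← intervalIntegral.integral_add]
  all_goals exact (by fun_prop : Continuous _).intervalIntegrable _ _

/-- On the surface, the kinematic and Bernoulli conditions split the integrand of `V'` into the
Rellich surface term, the `x`-derivative of `x η ∂ₜψ + g x η² / 2`, and `¼ (∂ₜη ψ + g η²)`. -/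
theorem IsWW2D.virial_integrand_eq (hsol : IsWW2D L₁ h g T η ϕ) (ht : t ∈ Icc 0 T) {x : ℝ}
    (hx : x ∈ Icc 0 L₁) :
    1 / 4 * (etaT η t x * psi η ϕ t x + η t x * psiT η ϕ t x)
        + (x * etaT η t x * psiX η ϕ t x + x * η t x * etaX (psiT η ϕ) t x)
      = (x * (phiX ϕ t x (η t x) * phiY ϕ t x (η t x))
          + x * etaX η t x * (phiY ϕ t x (η t x) ^ 2 - phiX ϕ t x (η t x) ^ 2) / 2
          + 3 / 8 * η t x * (phiX ϕ t x (η t x) ^ 2 - phiY ϕ t x (η t x) ^ 2)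
          + 3 / 4 * η t x * etaX η t x * (phiX ϕ t x (η t x) * phiY ϕ t x (η t x)))
        + ((η t x + x * etaX η t x) * psiT η ϕ t x + x * η t x * etaX (psiT η ϕ) t x
          + g / 2 * (η t x ^ 2 + x * (2 * η t x * etaX η t x)))
        + 1 / 4 * (etaT η t x * psi η ϕ t x + g * η t x ^ 2) := by
  rw [psiX_eq hsol.smooth_eta hsol.smooth_phi, psiT_eq hsol.smooth_eta hsol.smooth_phi]
  linear_combination (x * phiX ϕ t x (η t x) - 3 / 4 * η t x * phiY ϕ t x (η t x))
      * hsol.kinematic t ht x hx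
    + (-(x * etaX η t x) - 3 / 4 * η t x) * hsol.bernoulli t ht x hx

theorem IsWW2D.virial_rate_eq (hsol : IsWW2D L₁ h g T η ϕ) (hL : 0 ≤ L₁) (hh : 0 ≤ h)
    (ht : t ∈ Icc 0 T) :
    ∫ x in 0..L₁, (1 / 4 * (etaT η t x * psi η ϕ t x + η t x * psiT η ϕ t x)
        + (x * etaT η t x * psiX η ϕ t x + x * η t x * etaX (psiT η ϕ) t x))
      = 1 / 2 * energy2D L₁ h g η ϕ t
        + L₁ / 2 * (∫ y in -h..η t L₁, phiY ϕ t L₁ y ^ 2)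
        + 1 / 2 * (∫ x in 0..L₁, (h + 7 / 4 * η t x) * phiX ϕ t x (-h) ^ 2)
        - 7 / 4 * (∫ x in 0..L₁, ∫ y in -h..η t x, etaX η t x * phiX ϕ t x y * phiY ϕ t x y)
        - L₁ * Theta g η ϕ t L₁ := by
  have hη := hsol.smooth_eta
  have hϕ := hsol.smooth_phi
  have hD : ∀ x ∈ uIcc 0 L₁,
      HasDerivAt (fun x => x * η t x * psiT η ϕ t x + g / 2 * (x * η t x ^ 2))
        ((η t x + x * etaX η t x) * psiT η ϕ t x + x * η t x * etaX (psiT η ϕ) t x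
          + g / 2 * (η t x ^ 2 + x * (2 * η t x * etaX η t x))) x := fun x _ =>
    ((((hasDerivAt_id' x).fun_mul (hasDerivAt_etaX hη t x)).fun_mul
      (hasDerivAt_etaX (contDiff_psiT hη hϕ) t x)).fun_add
      (((hasDerivAt_id' x).fun_mul ((hasDerivAt_etaX hη t x).fun_pow 2)).const_mul
        (g / 2))).congr_deriv (by push_cast; ring)
  rw [integral_congr fun x hx => hsol.virial_integrand_eq ht (uIcc_of_le hL ▸ hx),
    intervalIntegral.integral_add, intervalIntegral.integral_add,
    hsol.integral_rellich_surface hL hh ht, integral_eq_sub_of_hasDerivAt hD,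
    intervalIntegral.integral_const_mul, intervalIntegral.integral_add,
    intervalIntegral.integral_const_mul, ← hsol.integral_sq_grad hL hh ht, energy2D, Theta]
  · ring
  all_goals exact (by fun_prop : Continuous _).intervalIntegrable _ _

end Virial

theorem main_identity_2d_general
    (L₁ h g T : ℝ) (hL : 0 < L₁) (hh : 0 < h) (hT : 0 < T)
    (η : ℝ → ℝ → ℝ) (ϕ : ℝ → ℝ → ℝ → ℝ) (hsol : IsWW2D L₁ h g T η ϕ) :
    L₁ * ∫ t in (0:ℝ)..T, Theta g η ϕ t L₁
      = T / 2 * energy2D L₁ h g η ϕ 0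
        + L₁ / 2 * (∫ t in (0:ℝ)..T, ∫ y in (-h)..(η t L₁), (phiY ϕ t L₁ y) ^ 2)
        + 1 / 2 * (∫ t in (0:ℝ)..T, ∫ x in (0:ℝ)..L₁,
            (h + 7 / 4 * η t x) * (phiX ϕ t x (-h)) ^ 2)
        - 1 / 4 * ((∫ x in (0:ℝ)..L₁, η T x * psi η ϕ T x)
            - ∫ x in (0:ℝ)..L₁, η 0 x * psi η ϕ 0 x)
        - ((∫ x in (0:ℝ)..L₁, x * η T x * psiX η ϕ T x)
            - ∫ x in (0:ℝ)..L₁, x * η 0 x * psiX η ϕ 0 x)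
        - 7 / 4 * ∫ t in (0:ℝ)..T, ∫ x in (0:ℝ)..L₁, ∫ y in (-h)..(η t x),
            etaX η t x * phiX ϕ t x y * phiY ϕ t x y := by
  have hη := hsol.smooth_eta
  have hϕ := hsol.smooth_phi
  have hΘ : Continuous fun t => Theta g η ϕ t L₁ := by unfold Theta; fun_prop
  have hV : ∀ t ∈ uIcc 0 T, HasDerivAt (fun s => 1 / 4 * (∫ x in 0..L₁, η s x * psi η ϕ s x)
        + ∫ x in 0..L₁, x * η s x * psiX η ϕ s x)
      (1 / 2 * energy2D L₁ h g η ϕ 0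
        + L₁ / 2 * (∫ y in -h..η t L₁, phiY ϕ t L₁ y ^ 2)
        + 1 / 2 * (∫ x in 0..L₁, (h + 7 / 4 * η t x) * phiX ϕ t x (-h) ^ 2)
        - 7 / 4 * (∫ x in 0..L₁, ∫ y in -h..η t x, etaX η t x * phiX ϕ t x y * phiY ϕ t x y)
        - L₁ * Theta g η ϕ t L₁) t := by
    intro t ht
    rw [uIcc_of_le hT.le] at ht
    rw [← hsol.energy2D_eq_energy2D_zero hL.le hh.le ht, ← hsol.virial_rate_eq hL.le hh.le ht]
    exact hasDerivAt_virial hη hϕ L₁ t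
  have hFTC :=
    integral_eq_sub_of_hasDerivAt hV ((by fun_prop : Continuous _).intervalIntegrable _ _)
  rw [intervalIntegral.integral_sub, intervalIntegral.integral_sub, intervalIntegral.integral_add,
    intervalIntegral.integral_add, intervalIntegral.integral_const,
    intervalIntegral.integral_const_mul, intervalIntegral.integral_const_mul,
    intervalIntegral.integral_const_mul, intervalIntegral.integral_const_mul] at hFTC
  · simp only [smul_eq_mul, sub_zero] at hFTC
    linarith
  all_goals exact (by fun_prop : Continuous _).intervalIntegrable _ _

/-- the main identity (Theorem 1.3) for two-dimensional waves. -/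
theorem main_identity_2d
    (L₁ h g T : ℝ) (hL : 0 < L₁) (hh : 0 < h) (hg : 0 < g) (hT : 0 < T)
    (η : ℝ → ℝ → ℝ) (ϕ : ℝ → ℝ → ℝ → ℝ) (hsol : IsWW2D L₁ h g T η ϕ) :
    L₁ * ∫ t in (0:ℝ)..T, Theta g η ϕ t L₁
      = T / 2 * energy2D L₁ h g η ϕ 0
        + L₁ / 2 * (∫ t in (0:ℝ)..T, ∫ y in (-h)..(η t L₁), (phiY ϕ t L₁ y) ^ 2)
        + 1 / 2 * (∫ t in (0:ℝ)..T, ∫ x in (0:ℝ)..L₁,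
            (h + 7 / 4 * η t x) * (phiX ϕ t x (-h)) ^ 2)
        - 1 / 4 * ((∫ x in (0:ℝ)..L₁, η T x * psi η ϕ T x)
            - ∫ x in (0:ℝ)..L₁, η 0 x * psi η ϕ 0 x)
        - ((∫ x in (0:ℝ)..L₁, x * η T x * psiX η ϕ T x)
            - ∫ x in (0:ℝ)..L₁, x * η 0 x * psiX η ϕ 0 x)
        - 7 / 4 * ∫ t in (0:ℝ)..T, ∫ x in (0:ℝ)..L₁, ∫ y in (-h)..(η t x),
            etaX η t x * phiX ϕ t x y * phiY ϕ t x y :=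
  main_identity_2d_general L₁ h g T hL hh hT η ϕ hsol
end
end

section
/- (Pohozaev identity, three-dimensional case.) In the static two-dimensional-surface setting (Q = [0,L₁] × [0,L₂]), one has ∬_Q (G(η)ψ)(x)·(x·∇ψ(x)) dx = (1/2)·[ L₁∫₀^{L₂}∫₋ₕ^{η(L₁,x₂)} |∇_{x,y}ϕ(L₁,x₂,y)|² dy dx₂ + L₂∫₀^{L₁}∫₋ₕ^{η(x₁,L₂)} |∇_{x,y}ϕ(x₁,L₂,y)|² dy dx₁ + h∬_Q |∇_{x,y}ϕ(x,−h)|² dx ] − (1/2)∬_Ω |∇_{x,y}ϕ|² dx dy + (1/2)∬_Q (η(x) − x·∇η(x))·(|V(x)|² + B(x)² − 2B(x)·G(η)ψ(x)) dx. (The bracketed quantity is (1/2)∫_R |∇_{x,y}ϕ|²·((x,y)·n) dS over the solid part R of ∂Ω, the faces {x₁ = 0} and {x₂ = 0} contributing zero.) -/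
open Real Set MeasureTheory

noncomputable section

/-- `∂_{x₁}ϕ` -/
def pX1 (ϕ : ℝ → ℝ → ℝ → ℝ) (x₁ x₂ y : ℝ) : ℝ := deriv (fun s => ϕ s x₂ y) x₁

/-- `∂_{x₂}ϕ` -/
def pX2 (ϕ : ℝ → ℝ → ℝ → ℝ) (x₁ x₂ y : ℝ) : ℝ := deriv (fun s => ϕ x₁ s y) x₂

/-- `∂_yϕ` -/
def pY (ϕ : ℝ → ℝ → ℝ → ℝ) (x₁ x₂ y : ℝ) : ℝ := deriv (fun s => ϕ x₁ x₂ s) y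

/-- `|∇_{x,y}ϕ|²` -/
def gradSq (ϕ : ℝ → ℝ → ℝ → ℝ) (x₁ x₂ y : ℝ) : ℝ :=
  (pX1 ϕ x₁ x₂ y) ^ 2 + (pX2 ϕ x₁ x₂ y) ^ 2 + (pY ϕ x₁ x₂ y) ^ 2

/-- `∂_{x₁}η` -/
def eX1 (η : ℝ → ℝ → ℝ) (x₁ x₂ : ℝ) : ℝ := deriv (fun s => η s x₂) x₁

/-- `∂_{x₂}η` -/
def eX2 (η : ℝ → ℝ → ℝ) (x₁ x₂ : ℝ) : ℝ := deriv (fun s => η x₁ s) x₂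

/-!
With `X(x, y) = (x, y)`, Rellich's multiplier field `W = (X·∇ϕ)∇ϕ - ½|∇ϕ|² X` satisfies
`div W = (X·∇ϕ)Δϕ - ½|∇ϕ|²`, which is `-½|∇ϕ|²` when `ϕ` is harmonic. Writing `∭_Ω div W` as
an iterated integral and using the Leibniz rule for the moving top `y = η(x)` turns it into the
flux of `W` through `∂Ω`. On the walls and the bottom the Neumann conditions kill the normal
derivative, so there `W·n = -½|∇ϕ|² (X·n)`: this vanishes on `{x₁ = 0}` and `{x₂ = 0}` and gives
the terms with `L₁`, `L₂` and `h`. On the free surface, since `∇ψ = V + B∇η`, the flux density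
`W·(-∇η, 1)` is pointwise `G(η)ψ (x·∇ψ) - ½(η - x·∇η)(|V|² + B² - 2B G(η)ψ)`.
-/

open Function

section IteratedIntegral

variable {f g : ℝ → ℝ → ℝ}

theorem hasDerivAt_intervalIntegral_of_continuous (hf : Continuous (uncurry f))
    (hg : Continuous (uncurry g)) (hd : ∀ t y, HasDerivAt (f · y) (g t y) t) (a c t₀ : ℝ) :
    HasDerivAt (fun t => ∫ y in a..c, f t y) (∫ y in a..c, g t₀ y) t₀ := by
  obtain ⟨C, hC⟩ : ∃ C, ∀ p ∈ Icc (t₀ - 1) (t₀ + 1) ×ˢ uIcc a c, ‖uncurry g p‖ ≤ C :=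
    (isCompact_Icc.prod isCompact_uIcc).exists_bound_of_continuousOn hg.continuousOn
  refine (intervalIntegral.hasDerivAt_integral_of_dominated_loc_of_deriv_le
      (bound := fun _ => C) (Metric.ball_mem_nhds t₀ one_pos)
      (.of_forall fun t => (hf.uncurry_left t).aestronglyMeasurable)
      ((hf.uncurry_left t₀).intervalIntegrable _ _)
      (hg.uncurry_left t₀).aestronglyMeasurable ?_ intervalIntegrable_const
      (.of_forall fun y _ t _ => hd t y)).2
  refine .of_forall fun y hy t ht => hC (t, y) ⟨?_, uIoc_subset_uIcc hy⟩
  rw [Metric.mem_ball, Real.dist_eq, abs_lt] at ht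
  constructor <;> linarith

open ContinuousLinearMap in
theorem hasDerivAt_intervalIntegral_upper_of_continuous (hf : Continuous (uncurry f))
    (hg : Continuous (uncurry g)) (hd : ∀ t y, HasDerivAt (f · y) (g t y) t)
    {b : ℝ → ℝ} {b' t₀ : ℝ} (hb : HasDerivAt b b' t₀) (a : ℝ) :
    HasDerivAt (fun t => ∫ y in a..b t, f t y)
      (b' * f t₀ (b t₀) + ∫ y in a..b t₀, g t₀ y) t₀ := by
  have hsmul : Continuous fun c : ℝ => smulRight (1 : ℝ →L[ℝ] ℝ) c :=
    (smulRightL ℝ ℝ ℝ 1).continuous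
  have hgI : Continuous fun p : ℝ × ℝ => ∫ y in a..p.2, g p.1 y := by fun_prop
  have hF := hasStrictFDerivAt_uncurry_coprod (u := (t₀, b t₀))
    (f := fun t s => ∫ y in a..s, f t y)
    (f₁ := fun t s => smulRight (1 : ℝ →L[ℝ] ℝ) (∫ y in a..s, g t y))
    (f₂ := fun t s => smulRight (1 : ℝ →L[ℝ] ℝ) (f t s))
    (.of_forall fun p =>
      (hasDerivAt_intervalIntegral_of_continuous hf hg hd a p.2 p.1).hasFDerivAt)
    (.of_forall fun p =>
      ((hf.uncurry_left p.1).integral_hasStrictDerivAt a p.2).hasDerivAt.hasFDerivAt)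
    (hsmul.comp hgI).continuousAt (hsmul.comp hf).continuousAt
  refine (hF.hasFDerivAt.comp_hasDerivAt t₀ ((hasDerivAt_id t₀).prodMk hb)).congr_deriv ?_
  change smulRight (1 : ℝ →L[ℝ] ℝ) (∫ y in a..b t₀, g t₀ y) 1
    + smulRight (1 : ℝ →L[ℝ] ℝ) (f t₀ (b t₀)) b' = _
  simp only [smulRight_apply, one_apply_eq_self, smul_eq_mul, one_mul]
  ring

variable (a₁ b₁ a₂ b₂ : ℝ)

theorem intervalIntegral_integral_swap_of_continuous (hf : Continuous (uncurry f)) :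
    ∫ x₁ in a₁..b₁, ∫ x₂ in a₂..b₂, f x₁ x₂ = ∫ x₂ in a₂..b₂, ∫ x₁ in a₁..b₁, f x₁ x₂ := by
  have hint : Integrable (uncurry f)
      ((volume.restrict (uIoc a₁ b₁)).prod (volume.restrict (uIoc a₂ b₂))) := by
    rw [Measure.prod_restrict]
    exact (hf.continuousOn.integrableOn_compact (isCompact_uIcc.prod isCompact_uIcc)).mono_set
      (prod_mono uIoc_subset_uIcc uIoc_subset_uIcc)
  simp only [intervalIntegral.intervalIntegral_eq_integral_uIoc, integral_smul, smul_smul,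
    mul_comm]
  rw [integral_integral_swap hint]

theorem intervalIntegral_integral_add (hf : Continuous (uncurry f))
    (hg : Continuous (uncurry g)) :
    ∫ x₁ in a₁..b₁, ∫ x₂ in a₂..b₂, (f x₁ x₂ + g x₁ x₂)
      = (∫ x₁ in a₁..b₁, ∫ x₂ in a₂..b₂, f x₁ x₂) + ∫ x₁ in a₁..b₁, ∫ x₂ in a₂..b₂, g x₁ x₂ := by
  have hfI : Continuous fun x₁ => ∫ x₂ in a₂..b₂, f x₁ x₂ := by fun_prop
  have hgI : Continuous fun x₁ => ∫ x₂ in a₂..b₂, g x₁ x₂ := by fun_prop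
  rw [← intervalIntegral.integral_add (hfI.intervalIntegrable _ _) (hgI.intervalIntegrable _ _)]
  exact intervalIntegral.integral_congr fun x₁ _ => intervalIntegral.integral_add
    ((hf.uncurry_left x₁).intervalIntegrable _ _) ((hg.uncurry_left x₁).intervalIntegrable _ _)

theorem intervalIntegral_integral_sub (hf : Continuous (uncurry f))
    (hg : Continuous (uncurry g)) :
    ∫ x₁ in a₁..b₁, ∫ x₂ in a₂..b₂, (f x₁ x₂ - g x₁ x₂)
      = (∫ x₁ in a₁..b₁, ∫ x₂ in a₂..b₂, f x₁ x₂) - ∫ x₁ in a₁..b₁, ∫ x₂ in a₂..b₂, g x₁ x₂ := by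
  have hfI : Continuous fun x₁ => ∫ x₂ in a₂..b₂, f x₁ x₂ := by fun_prop
  have hgI : Continuous fun x₁ => ∫ x₂ in a₂..b₂, g x₁ x₂ := by fun_prop
  rw [← intervalIntegral.integral_sub (hfI.intervalIntegrable _ _) (hgI.intervalIntegrable _ _)]
  exact intervalIntegral.integral_congr fun x₁ _ => intervalIntegral.integral_sub
    ((hf.uncurry_left x₁).intervalIntegrable _ _) ((hg.uncurry_left x₁).intervalIntegrable _ _)

theorem intervalIntegral_integral_deriv_fst
    (hd : ∀ x₁ x₂, HasDerivAt (f · x₂) (g x₁ x₂) x₁) (hg : Continuous (uncurry g)) :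
    ∫ x₁ in a₁..b₁, ∫ x₂ in a₂..b₂, g x₁ x₂ = ∫ x₂ in a₂..b₂, (f b₁ x₂ - f a₁ x₂) := by
  rw [intervalIntegral_integral_swap_of_continuous _ _ _ _ hg]
  exact intervalIntegral.integral_congr fun x₂ _ =>
    intervalIntegral.integral_eq_sub_of_hasDerivAt (fun x₁ _ => hd x₁ x₂)
      ((hg.uncurry_right x₂).intervalIntegrable _ _)

theorem intervalIntegral_integral_deriv_snd
    (hd : ∀ x₁ x₂, HasDerivAt (f x₁ ·) (g x₁ x₂) x₂) (hg : Continuous (uncurry g)) :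
    ∫ x₁ in a₁..b₁, ∫ x₂ in a₂..b₂, g x₁ x₂ = ∫ x₁ in a₁..b₁, (f x₁ b₂ - f x₁ a₂) :=
  intervalIntegral.integral_congr fun x₁ _ => intervalIntegral.integral_eq_sub_of_hasDerivAt
    (fun x₂ _ => hd x₁ x₂) ((hg.uncurry_left x₁).intervalIntegrable _ _)

end IteratedIntegral

section Slices

variable {F : Type*} [NormedAddCommGroup F] [NormedSpace ℝ F] {f : ℝ × ℝ × ℝ → F}
  {f' : ℝ × ℝ × ℝ →L[ℝ] F} {x₁ x₂ y : ℝ}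

theorem HasFDerivAt.hasDerivAt_slice₁ (hf : HasFDerivAt f f' (x₁, x₂, y)) :
    HasDerivAt (fun s => f (s, x₂, y)) (f' (1, 0, 0)) x₁ :=
  hf.comp_hasDerivAt x₁
    ((hasDerivAt_id _).prodMk ((hasDerivAt_const _ _).prodMk (hasDerivAt_const _ _)))

theorem HasFDerivAt.hasDerivAt_slice₂ (hf : HasFDerivAt f f' (x₁, x₂, y)) :
    HasDerivAt (fun s => f (x₁, s, y)) (f' (0, 1, 0)) x₂ :=
  hf.comp_hasDerivAt x₂
    ((hasDerivAt_const _ _).prodMk ((hasDerivAt_id _).prodMk (hasDerivAt_const _ _)))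

theorem HasFDerivAt.hasDerivAt_slice₃ (hf : HasFDerivAt f f' (x₁, x₂, y)) :
    HasDerivAt (fun s => f (x₁, x₂, s)) (f' (0, 0, 1)) y :=
  hf.comp_hasDerivAt y
    ((hasDerivAt_const _ _).prodMk ((hasDerivAt_const _ _).prodMk (hasDerivAt_id _)))

end Slices

theorem ContinuousLinearMap.apply_eq_sum_coord (L : ℝ × ℝ × ℝ →L[ℝ] ℝ) (q : ℝ × ℝ × ℝ) :
    L q = q.1 * L (1, 0, 0) + q.2.1 * L (0, 1, 0) + q.2.2 * L (0, 0, 1) := by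
  conv_lhs => rw [show q = q.1 • ((1 : ℝ), (0 : ℝ), (0 : ℝ)) + q.2.1 • ((0 : ℝ), (1 : ℝ), (0 : ℝ))
    + q.2.2 • ((0 : ℝ), (0 : ℝ), (1 : ℝ)) by ext <;> simp]
  simp only [map_add, map_smul, smul_eq_mul]

def divergence (W : ℝ × ℝ × ℝ → ℝ × ℝ × ℝ) (p : ℝ × ℝ × ℝ) : ℝ :=
  (fderiv ℝ W p (1, 0, 0)).1 + (fderiv ℝ W p (0, 1, 0)).2.1 + (fderiv ℝ W p (0, 0, 1)).2.2

def gradNormSq (Φ : ℝ × ℝ × ℝ → ℝ) (p : ℝ × ℝ × ℝ) : ℝ :=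
  fderiv ℝ Φ p (1, 0, 0) ^ 2 + fderiv ℝ Φ p (0, 1, 0) ^ 2 + fderiv ℝ Φ p (0, 0, 1) ^ 2

def pohozaevField (Φ : ℝ × ℝ × ℝ → ℝ) (p : ℝ × ℝ × ℝ) : ℝ × ℝ × ℝ :=
  fderiv ℝ Φ p p • (fderiv ℝ Φ p (1, 0, 0), fderiv ℝ Φ p (0, 1, 0), fderiv ℝ Φ p (0, 0, 1))
    - (gradNormSq Φ p / 2) • p

section PohozaevField

variable {Φ : ℝ × ℝ × ℝ → ℝ}

section SecondDerivatives

variable (hΦ : ContDiff ℝ 2 Φ) (v : ℝ × ℝ × ℝ) (x₁ x₂ y : ℝ)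
include hΦ

theorem hasFDerivAt_fderiv_apply (p : ℝ × ℝ × ℝ) :
    HasFDerivAt (fun q => fderiv ℝ Φ q v) ((fderiv ℝ (fderiv ℝ Φ) p).flip v) p := by
  simpa using (((hΦ.fderiv_right (m := 1) (by norm_num)).differentiable one_ne_zero
    p).hasFDerivAt).clm_apply (hasFDerivAt_const v p)

theorem deriv_fderiv_slice₁ :
    deriv (fun s => fderiv ℝ Φ (s, x₂, y) v) x₁ = fderiv ℝ (fderiv ℝ Φ) (x₁, x₂, y) (1, 0, 0) v :=
  (hasFDerivAt_fderiv_apply hΦ v (x₁, x₂, y)).hasDerivAt_slice₁.deriv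

theorem deriv_fderiv_slice₂ :
    deriv (fun s => fderiv ℝ Φ (x₁, s, y) v) x₂ = fderiv ℝ (fderiv ℝ Φ) (x₁, x₂, y) (0, 1, 0) v :=
  (hasFDerivAt_fderiv_apply hΦ v (x₁, x₂, y)).hasDerivAt_slice₂.deriv

theorem deriv_fderiv_slice₃ :
    deriv (fun s => fderiv ℝ Φ (x₁, x₂, s) v) y = fderiv ℝ (fderiv ℝ Φ) (x₁, x₂, y) (0, 0, 1) v :=
  (hasFDerivAt_fderiv_apply hΦ v (x₁, x₂, y)).hasDerivAt_slice₃.deriv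

end SecondDerivatives

theorem divergence_pohozaevField (hΦ : ContDiff ℝ 2 Φ) (p : ℝ × ℝ × ℝ) :
    divergence (pohozaevField Φ) p =
      fderiv ℝ Φ p p * (fderiv ℝ (fderiv ℝ Φ) p (1, 0, 0) (1, 0, 0)
        + fderiv ℝ (fderiv ℝ Φ) p (0, 1, 0) (0, 1, 0)
        + fderiv ℝ (fderiv ℝ Φ) p (0, 0, 1) (0, 0, 1)) - gradNormSq Φ p / 2 := by
  have hD (v : ℝ × ℝ × ℝ) := hasFDerivAt_fderiv_apply hΦ v p
  have hm := ((hΦ.fderiv_right (m := 1) (by norm_num)).differentiable one_ne_zero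
    p).hasFDerivAt.clm_apply (hasFDerivAt_id p)
  have hF := ((hD (1, 0, 0)).pow 2 |>.add ((hD (0, 1, 0)).pow 2)).add ((hD (0, 0, 1)).pow 2)
  have hW := ((hm.smul ((hD (1, 0, 0)).prodMk ((hD (0, 1, 0)).prodMk (hD (0, 0, 1))))).sub
      ((hF.mul_const (2⁻¹ : ℝ)).smul (hasFDerivAt_id p))).congr_of_eventuallyEq
    (f₁ := pohozaevField Φ) (.of_forall fun q => by
      simp [pohozaevField, gradNormSq, div_eq_mul_inv])
  have hsymm := (hΦ.contDiffAt (x := p)).isSymmSndFDerivAt (by simp)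
  unfold divergence
  rw [hW.fderiv]
  simp only [gradNormSq, id_eq, ContinuousLinearMap.comp_id, Pi.add_apply, Nat.add_one_sub_one,
    pow_one, nsmul_eq_mul, Nat.cast_ofNat, smul_add, sub_apply,
    add_apply, smul_apply, ContinuousLinearMap.prod_apply,
    ContinuousLinearMap.flip_apply, Prod.smul_mk, smul_eq_mul, ContinuousLinearMap.smulRight_apply,
    Prod.mk_add_mk, ContinuousLinearMap.id_apply, mul_one, mul_zero, Prod.fst_sub, Prod.fst_add,
    Prod.smul_fst, Prod.snd_sub, Prod.snd_add, Prod.smul_snd]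
  -- the terms `p.i ∂ⱼΦ ∂ᵢ∂ⱼΦ` cancel by symmetry of the Hessian
  rw [(fderiv ℝ (fderiv ℝ Φ) p (1, 0, 0)).apply_eq_sum_coord p,
    (fderiv ℝ (fderiv ℝ Φ) p (0, 1, 0)).apply_eq_sum_coord p,
    (fderiv ℝ (fderiv ℝ Φ) p (0, 0, 1)).apply_eq_sum_coord p,
    hsymm (1, 0, 0) (0, 1, 0), hsymm (1, 0, 0) (0, 0, 1), hsymm (0, 1, 0) (0, 0, 1)]
  ring

theorem contDiff_pohozaevField (hΦ : ContDiff ℝ 2 Φ) : ContDiff ℝ 1 (pohozaevField Φ) := by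
  have hΦ' : ContDiff ℝ 1 (fderiv ℝ Φ) := hΦ.fderiv_right (by norm_num)
  unfold pohozaevField gradNormSq
  fun_prop

variable {p : ℝ × ℝ × ℝ}

theorem pohozaevField_fst_of_fderiv_eq_zero (hp : fderiv ℝ Φ p (1, 0, 0) = 0) :
    (pohozaevField Φ p).1 = -(p.1 * gradNormSq Φ p) / 2 := by
  simp only [pohozaevField, hp, Prod.smul_mk, smul_eq_mul, mul_zero, Prod.fst_sub, Prod.smul_fst,
    zero_sub]
  ring

theorem pohozaevField_snd_fst_of_fderiv_eq_zero (hp : fderiv ℝ Φ p (0, 1, 0) = 0) :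
    (pohozaevField Φ p).2.1 = -(p.2.1 * gradNormSq Φ p) / 2 := by
  simp only [pohozaevField, hp, Prod.smul_mk, smul_eq_mul, mul_zero, Prod.snd_sub, Prod.smul_snd,
    Prod.fst_sub, Prod.smul_fst, zero_sub]
  ring

theorem pohozaevField_snd_snd_of_fderiv_eq_zero (hp : fderiv ℝ Φ p (0, 0, 1) = 0) :
    (pohozaevField Φ p).2.2 = -(p.2.2 * gradNormSq Φ p) / 2 := by
  simp only [pohozaevField, hp, Prod.smul_mk, smul_eq_mul, mul_zero, Prod.snd_sub, Prod.smul_snd,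
    zero_sub]
  ring

theorem pohozaevField_flux_graph (x₁ x₂ z e₁ e₂ : ℝ) :
    letI V₁ := fderiv ℝ Φ (x₁, x₂, z) (1, 0, 0)
    letI V₂ := fderiv ℝ Φ (x₁, x₂, z) (0, 1, 0)
    letI B := fderiv ℝ Φ (x₁, x₂, z) (0, 0, 1)
    (pohozaevField Φ (x₁, x₂, z)).2.2 - e₁ * (pohozaevField Φ (x₁, x₂, z)).1
        - e₂ * (pohozaevField Φ (x₁, x₂, z)).2.1
      = (B - (e₁ * V₁ + e₂ * V₂)) * (x₁ * (V₁ + e₁ * B) + x₂ * (V₂ + e₂ * B))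
        - 1 / 2 * ((z - (x₁ * e₁ + x₂ * e₂))
            * (V₁ ^ 2 + V₂ ^ 2 + B ^ 2 - 2 * B * (B - (e₁ * V₁ + e₂ * V₂)))) := by
  simp only [pohozaevField, gradNormSq, (fderiv ℝ Φ (x₁, x₂, z)).apply_eq_sum_coord (x₁, x₂, z),
    Prod.smul_mk, smul_eq_mul, Prod.mk_sub_mk]
  ring

end PohozaevField

section GraphDomain

variable {η : ℝ → ℝ → ℝ}

theorem hasDerivAt_eX1 (hη : Differentiable ℝ (uncurry η)) (x₁ x₂ : ℝ) :
    HasDerivAt (η · x₂) (eX1 η x₁ x₂) x₁ :=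
  ((hη _).comp x₁ ((differentiableAt_id).prodMk (differentiableAt_const x₂))).hasDerivAt

theorem hasDerivAt_eX2 (hη : Differentiable ℝ (uncurry η)) (x₁ x₂ : ℝ) :
    HasDerivAt (η x₁ ·) (eX2 η x₁ x₂) x₂ :=
  ((hη _).comp x₂ ((differentiableAt_const x₁).prodMk differentiableAt_id)).hasDerivAt

theorem continuous_eX1 (hη : ContDiff ℝ 1 (uncurry η)) : Continuous (uncurry (eX1 η)) := by
  have h : uncurry (eX1 η) = fun x => fderiv ℝ (uncurry η) x (1, 0) := by
    ext ⟨x₁, x₂⟩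
    exact ((hη.differentiable one_ne_zero (x₁, x₂)).hasFDerivAt.comp_hasDerivAt x₁
      ((hasDerivAt_id x₁).prodMk (hasDerivAt_const x₁ x₂))).deriv
  rw [h]
  exact (hη.continuous_fderiv one_ne_zero).clm_apply continuous_const

theorem continuous_eX2 (hη : ContDiff ℝ 1 (uncurry η)) : Continuous (uncurry (eX2 η)) := by
  have h : uncurry (eX2 η) = fun x => fderiv ℝ (uncurry η) x (0, 1) := by
    ext ⟨x₁, x₂⟩
    exact ((hη.differentiable one_ne_zero (x₁, x₂)).hasFDerivAt.comp_hasDerivAt x₂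
      ((hasDerivAt_const x₂ x₁).prodMk (hasDerivAt_id x₂))).deriv
  rw [h]
  exact (hη.continuous_fderiv one_ne_zero).clm_apply continuous_const

variable {W : ℝ × ℝ × ℝ → ℝ × ℝ × ℝ} (hW : ContDiff ℝ 1 W) (hη : ContDiff ℝ 1 (uncurry η))
  (c : ℝ)
include hW hη

theorem hasDerivAt_intervalIntegral_graph_fst (x₁ x₂ : ℝ) :
    HasDerivAt (fun t => ∫ y in c..η t x₂, (W (t, x₂, y)).1)
      (eX1 η x₁ x₂ * (W (x₁, x₂, η x₁ x₂)).1
        + ∫ y in c..η x₁ x₂, (fderiv ℝ W (x₁, x₂, y) (1, 0, 0)).1) x₁ := by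
  have hWc : Continuous W := hW.continuous
  have hW' : Continuous (fderiv ℝ W) := hW.continuous_fderiv one_ne_zero
  exact hasDerivAt_intervalIntegral_upper_of_continuous (f := fun t y => (W (t, x₂, y)).1)
    (by fun_prop) (by fun_prop)
    (fun t y => (hW.differentiable one_ne_zero _).hasFDerivAt.fst.hasDerivAt_slice₁)
    (hasDerivAt_eX1 (hη.differentiable one_ne_zero) x₁ x₂) c

theorem hasDerivAt_intervalIntegral_graph_snd (x₁ x₂ : ℝ) :
    HasDerivAt (fun t => ∫ y in c..η x₁ t, (W (x₁, t, y)).2.1)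
      (eX2 η x₁ x₂ * (W (x₁, x₂, η x₁ x₂)).2.1
        + ∫ y in c..η x₁ x₂, (fderiv ℝ W (x₁, x₂, y) (0, 1, 0)).2.1) x₂ := by
  have hWc : Continuous W := hW.continuous
  have hW' : Continuous (fderiv ℝ W) := hW.continuous_fderiv one_ne_zero
  exact hasDerivAt_intervalIntegral_upper_of_continuous (f := fun t y => (W (x₁, t, y)).2.1)
    (by fun_prop) (by fun_prop)
    (fun t y => (hW.differentiable one_ne_zero _).hasFDerivAt.snd.fst.hasDerivAt_slice₂)
    (hasDerivAt_eX2 (hη.differentiable one_ne_zero) x₁ x₂) c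

theorem integral_divergence_under_graph (a₁ b₁ a₂ b₂ : ℝ) :
    ∫ x₁ in a₁..b₁, ∫ x₂ in a₂..b₂, ∫ y in c..η x₁ x₂, divergence W (x₁, x₂, y)
      = (∫ x₂ in a₂..b₂,
            ((∫ y in c..η b₁ x₂, (W (b₁, x₂, y)).1) - ∫ y in c..η a₁ x₂, (W (a₁, x₂, y)).1))
        + (∫ x₁ in a₁..b₁,
            ((∫ y in c..η x₁ b₂, (W (x₁, b₂, y)).2.1) - ∫ y in c..η x₁ a₂, (W (x₁, a₂, y)).2.1))
        + ∫ x₁ in a₁..b₁, ∫ x₂ in a₂..b₂,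
            ((W (x₁, x₂, η x₁ x₂)).2.2 - eX1 η x₁ x₂ * (W (x₁, x₂, η x₁ x₂)).1
              - eX2 η x₁ x₂ * (W (x₁, x₂, η x₁ x₂)).2.1 - (W (x₁, x₂, c)).2.2) := by
  have hWc : Continuous W := hW.continuous
  have hW' : Continuous (fderiv ℝ W) := hW.continuous_fderiv one_ne_zero
  have hηc : Continuous (uncurry η) := hη.continuous
  have hE₁ := continuous_eX1 hη
  have hE₂ := continuous_eX2 hη
  set D₁ : ℝ → ℝ → ℝ := fun x₁ x₂ => eX1 η x₁ x₂ * (W (x₁, x₂, η x₁ x₂)).1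
    + ∫ y in c..η x₁ x₂, (fderiv ℝ W (x₁, x₂, y) (1, 0, 0)).1
  set D₂ : ℝ → ℝ → ℝ := fun x₁ x₂ => eX2 η x₁ x₂ * (W (x₁, x₂, η x₁ x₂)).2.1
    + ∫ y in c..η x₁ x₂, (fderiv ℝ W (x₁, x₂, y) (0, 1, 0)).2.1
  set R : ℝ → ℝ → ℝ := fun x₁ x₂ => (W (x₁, x₂, η x₁ x₂)).2.2
    - eX1 η x₁ x₂ * (W (x₁, x₂, η x₁ x₂)).1 - eX2 η x₁ x₂ * (W (x₁, x₂, η x₁ x₂)).2.1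
    - (W (x₁, x₂, c)).2.2
  have hD₁ : Continuous (uncurry D₁) := by fun_prop
  have hD₂ : Continuous (uncurry D₂) := by fun_prop
  have hsplit (x₁ x₂ : ℝ) :
      ∫ y in c..η x₁ x₂, divergence W (x₁, x₂, y) = D₁ x₁ x₂ + D₂ x₁ x₂ + R x₁ x₂ := by
    have hvert : ∫ y in c..η x₁ x₂, (fderiv ℝ W (x₁, x₂, y) (0, 0, 1)).2.2
        = (W (x₁, x₂, η x₁ x₂)).2.2 - (W (x₁, x₂, c)).2.2 :=
      intervalIntegral.integral_eq_sub_of_hasDerivAt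
        (fun y _ => (hW.differentiable one_ne_zero _).hasFDerivAt.snd.snd.hasDerivAt_slice₃)
        (Continuous.intervalIntegrable (by fun_prop) _ _)
    simp only [divergence, D₁, D₂, R]
    rw [intervalIntegral.integral_add (Continuous.intervalIntegrable (by fun_prop) _ _)
        (Continuous.intervalIntegrable (by fun_prop) _ _),
      intervalIntegral.integral_add (Continuous.intervalIntegrable (by fun_prop) _ _)
        (Continuous.intervalIntegrable (by fun_prop) _ _), hvert]
    ring
  simp only [hsplit]
  rw [intervalIntegral_integral_add (f := fun x₁ x₂ => D₁ x₁ x₂ + D₂ x₁ x₂) _ _ _ _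
      (hD₁.add hD₂) (by fun_prop),
    intervalIntegral_integral_add _ _ _ _ hD₁ hD₂,
    intervalIntegral_integral_deriv_fst _ _ _ _ (hasDerivAt_intervalIntegral_graph_fst hW hη c) hD₁,
    intervalIntegral_integral_deriv_snd _ _ _ _ (hasDerivAt_intervalIntegral_graph_snd hW hη c) hD₂]

end GraphDomain

section Curried

variable {ϕ : ℝ → ℝ → ℝ → ℝ} {η : ℝ → ℝ → ℝ} (x₁ x₂ y : ℝ)
  (hϕ : Differentiable ℝ fun p : ℝ × ℝ × ℝ => ϕ p.1 p.2.1 p.2.2)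
include hϕ

theorem pX1_eq_fderiv :
    pX1 ϕ x₁ x₂ y = fderiv ℝ (fun p : ℝ × ℝ × ℝ => ϕ p.1 p.2.1 p.2.2) (x₁, x₂, y) (1, 0, 0) :=
  (hϕ _).hasFDerivAt.hasDerivAt_slice₁.deriv

theorem pX2_eq_fderiv :
    pX2 ϕ x₁ x₂ y = fderiv ℝ (fun p : ℝ × ℝ × ℝ => ϕ p.1 p.2.1 p.2.2) (x₁, x₂, y) (0, 1, 0) :=
  (hϕ _).hasFDerivAt.hasDerivAt_slice₂.deriv

theorem pY_eq_fderiv :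
    pY ϕ x₁ x₂ y = fderiv ℝ (fun p : ℝ × ℝ × ℝ => ϕ p.1 p.2.1 p.2.2) (x₁, x₂, y) (0, 0, 1) :=
  (hϕ _).hasFDerivAt.hasDerivAt_slice₃.deriv

theorem gradSq_eq_gradNormSq :
    gradSq ϕ x₁ x₂ y = gradNormSq (fun p : ℝ × ℝ × ℝ => ϕ p.1 p.2.1 p.2.2) (x₁, x₂, y) := by
  rw [gradSq, gradNormSq, pX1_eq_fderiv _ _ _ hϕ, pX2_eq_fderiv _ _ _ hϕ, pY_eq_fderiv _ _ _ hϕ]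

variable (hη : Differentiable ℝ (uncurry η))
include hη

theorem deriv_comp_graph_fst :
    deriv (fun s => ϕ s x₂ (η s x₂)) x₁
      = fderiv ℝ (fun p : ℝ × ℝ × ℝ => ϕ p.1 p.2.1 p.2.2) (x₁, x₂, η x₁ x₂) (1, 0, 0)
        + eX1 η x₁ x₂
          * fderiv ℝ (fun p : ℝ × ℝ × ℝ => ϕ p.1 p.2.1 p.2.2) (x₁, x₂, η x₁ x₂) (0, 0, 1) := by
  have : HasDerivAt (fun s => ϕ s x₂ (η s x₂)) (fderiv ℝ (fun p : ℝ × ℝ × ℝ => ϕ p.1 p.2.1 p.2.2)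
      (x₁, x₂, η x₁ x₂) (1, 0, eX1 η x₁ x₂)) x₁ := (hϕ _).hasFDerivAt.comp_hasDerivAt x₁
    ((hasDerivAt_id x₁).prodMk ((hasDerivAt_const x₁ x₂).prodMk (hasDerivAt_eX1 hη x₁ x₂)))
  rw [this.deriv, ContinuousLinearMap.apply_eq_sum_coord]
  simp

theorem deriv_comp_graph_snd :
    deriv (fun s => ϕ x₁ s (η x₁ s)) x₂
      = fderiv ℝ (fun p : ℝ × ℝ × ℝ => ϕ p.1 p.2.1 p.2.2) (x₁, x₂, η x₁ x₂) (0, 1, 0)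
        + eX2 η x₁ x₂
          * fderiv ℝ (fun p : ℝ × ℝ × ℝ => ϕ p.1 p.2.1 p.2.2) (x₁, x₂, η x₁ x₂) (0, 0, 1) := by
  have : HasDerivAt (fun s => ϕ x₁ s (η x₁ s)) (fderiv ℝ (fun p : ℝ × ℝ × ℝ => ϕ p.1 p.2.1 p.2.2)
      (x₁, x₂, η x₁ x₂) (0, 1, eX2 η x₁ x₂)) x₂ := (hϕ _).hasFDerivAt.comp_hasDerivAt x₂
    ((hasDerivAt_const x₂ x₁).prodMk ((hasDerivAt_id x₂).prodMk (hasDerivAt_eX2 hη x₁ x₂)))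
  rw [this.deriv, ContinuousLinearMap.apply_eq_sum_coord]
  simp

end Curried

section Rectangle

variable {Φ : ℝ × ℝ × ℝ → ℝ} {η : ℝ → ℝ → ℝ} {L₁ L₂ h : ℝ} (hL₁ : 0 ≤ L₁) (hL₂ : 0 ≤ L₂)
include hL₁ hL₂

theorem integral_divergence_pohozaevField_of_harmonic (hΦ : ContDiff ℝ 2 Φ)
    (hηh : ∀ x₁ ∈ Icc 0 L₁, ∀ x₂ ∈ Icc 0 L₂, -h ≤ η x₁ x₂)
    (hΔ : ∀ x₁ ∈ Icc 0 L₁, ∀ x₂ ∈ Icc 0 L₂, ∀ y ∈ Icc (-h) (η x₁ x₂),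
      fderiv ℝ (fderiv ℝ Φ) (x₁, x₂, y) (1, 0, 0) (1, 0, 0)
        + fderiv ℝ (fderiv ℝ Φ) (x₁, x₂, y) (0, 1, 0) (0, 1, 0)
        + fderiv ℝ (fderiv ℝ Φ) (x₁, x₂, y) (0, 0, 1) (0, 0, 1) = 0) :
    ∫ x₁ in (0:ℝ)..L₁, ∫ x₂ in (0:ℝ)..L₂, ∫ y in (-h)..(η x₁ x₂),
        divergence (pohozaevField Φ) (x₁, x₂, y)
      = -(1 / 2) * ∫ x₁ in (0:ℝ)..L₁, ∫ x₂ in (0:ℝ)..L₂, ∫ y in (-h)..(η x₁ x₂),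
          gradNormSq Φ (x₁, x₂, y) := by
  simp only [← intervalIntegral.integral_const_mul]
  refine intervalIntegral.integral_congr fun x₁ hx₁ => intervalIntegral.integral_congr
    fun x₂ hx₂ => intervalIntegral.integral_congr fun y hy => ?_
  rw [uIcc_of_le hL₁] at hx₁
  rw [uIcc_of_le hL₂] at hx₂
  rw [uIcc_of_le (hηh x₁ hx₁ x₂ hx₂)] at hy
  simp only [divergence_pohozaevField hΦ, hΔ x₁ hx₁ x₂ hx₂ y hy]
  ring

theorem integral_pohozaevField_faces_fst
    (hηh : ∀ x₁ ∈ Icc 0 L₁, ∀ x₂ ∈ Icc 0 L₂, -h ≤ η x₁ x₂)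
    (hside : ∀ x₁ ∈ ({0, L₁} : Set ℝ), ∀ x₂ ∈ Icc 0 L₂, ∀ y ∈ Icc (-h) (η x₁ x₂),
      fderiv ℝ Φ (x₁, x₂, y) (1, 0, 0) = 0) :
    ∫ x₂ in (0:ℝ)..L₂, ((∫ y in (-h)..(η L₁ x₂), (pohozaevField Φ (L₁, x₂, y)).1)
        - ∫ y in (-h)..(η 0 x₂), (pohozaevField Φ (0, x₂, y)).1)
      = -(L₁ / 2) * ∫ x₂ in (0:ℝ)..L₂, ∫ y in (-h)..(η L₁ x₂), gradNormSq Φ (L₁, x₂, y) := by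
  rw [← intervalIntegral.integral_const_mul]
  refine intervalIntegral.integral_congr fun x₂ hx₂ => ?_
  rw [uIcc_of_le hL₂] at hx₂
  have hface (a : ℝ) (ha : a ∈ ({0, L₁} : Set ℝ)) :
      ∫ y in (-h)..(η a x₂), (pohozaevField Φ (a, x₂, y)).1
        = -(a / 2) * ∫ y in (-h)..(η a x₂), gradNormSq Φ (a, x₂, y) := by
    have ha' : a ∈ Icc 0 L₁ := by rcases ha with rfl | rfl <;> simp [hL₁]
    rw [← intervalIntegral.integral_const_mul]
    refine intervalIntegral.integral_congr fun y hy => ?_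
    rw [uIcc_of_le (hηh a ha' x₂ hx₂)] at hy
    rw [pohozaevField_fst_of_fderiv_eq_zero (hside a ha x₂ hx₂ y hy)]
    ring
  simp [hface L₁ (by simp), hface 0 (by simp)]

theorem integral_pohozaevField_faces_snd
    (hηh : ∀ x₁ ∈ Icc 0 L₁, ∀ x₂ ∈ Icc 0 L₂, -h ≤ η x₁ x₂)
    (hside : ∀ x₂ ∈ ({0, L₂} : Set ℝ), ∀ x₁ ∈ Icc 0 L₁, ∀ y ∈ Icc (-h) (η x₁ x₂),
      fderiv ℝ Φ (x₁, x₂, y) (0, 1, 0) = 0) :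
    ∫ x₁ in (0:ℝ)..L₁, ((∫ y in (-h)..(η x₁ L₂), (pohozaevField Φ (x₁, L₂, y)).2.1)
        - ∫ y in (-h)..(η x₁ 0), (pohozaevField Φ (x₁, 0, y)).2.1)
      = -(L₂ / 2) * ∫ x₁ in (0:ℝ)..L₁, ∫ y in (-h)..(η x₁ L₂), gradNormSq Φ (x₁, L₂, y) := by
  rw [← intervalIntegral.integral_const_mul]
  refine intervalIntegral.integral_congr fun x₁ hx₁ => ?_
  rw [uIcc_of_le hL₁] at hx₁
  have hface (a : ℝ) (ha : a ∈ ({0, L₂} : Set ℝ)) :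
      ∫ y in (-h)..(η x₁ a), (pohozaevField Φ (x₁, a, y)).2.1
        = -(a / 2) * ∫ y in (-h)..(η x₁ a), gradNormSq Φ (x₁, a, y) := by
    have ha' : a ∈ Icc 0 L₂ := by rcases ha with rfl | rfl <;> simp [hL₂]
    rw [← intervalIntegral.integral_const_mul]
    refine intervalIntegral.integral_congr fun y hy => ?_
    rw [uIcc_of_le (hηh x₁ hx₁ a ha')] at hy
    rw [pohozaevField_snd_fst_of_fderiv_eq_zero (hside a ha x₁ hx₁ y hy)]
    ring
  simp [hface L₂ (by simp), hface 0 (by simp)]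

theorem integral_pohozaevField_top_sub_bottom (hΦ : ContDiff ℝ 1 Φ)
    (hη : ContDiff ℝ 1 (uncurry η))
    (hbot : ∀ x₁ ∈ Icc 0 L₁, ∀ x₂ ∈ Icc 0 L₂, fderiv ℝ Φ (x₁, x₂, -h) (0, 0, 1) = 0) :
    ∫ x₁ in (0:ℝ)..L₁, ∫ x₂ in (0:ℝ)..L₂,
        ((pohozaevField Φ (x₁, x₂, η x₁ x₂)).2.2
          - eX1 η x₁ x₂ * (pohozaevField Φ (x₁, x₂, η x₁ x₂)).1
          - eX2 η x₁ x₂ * (pohozaevField Φ (x₁, x₂, η x₁ x₂)).2.1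
          - (pohozaevField Φ (x₁, x₂, -h)).2.2)
      = (∫ x₁ in (0:ℝ)..L₁, ∫ x₂ in (0:ℝ)..L₂,
          (fderiv ℝ Φ (x₁, x₂, η x₁ x₂) (0, 0, 1)
              - (eX1 η x₁ x₂ * fderiv ℝ Φ (x₁, x₂, η x₁ x₂) (1, 0, 0)
                + eX2 η x₁ x₂ * fderiv ℝ Φ (x₁, x₂, η x₁ x₂) (0, 1, 0)))
            * (x₁ * (fderiv ℝ Φ (x₁, x₂, η x₁ x₂) (1, 0, 0)
                  + eX1 η x₁ x₂ * fderiv ℝ Φ (x₁, x₂, η x₁ x₂) (0, 0, 1))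
              + x₂ * (fderiv ℝ Φ (x₁, x₂, η x₁ x₂) (0, 1, 0)
                  + eX2 η x₁ x₂ * fderiv ℝ Φ (x₁, x₂, η x₁ x₂) (0, 0, 1))))
        - 1 / 2 * (∫ x₁ in (0:ℝ)..L₁, ∫ x₂ in (0:ℝ)..L₂,
            (η x₁ x₂ - (x₁ * eX1 η x₁ x₂ + x₂ * eX2 η x₁ x₂))
              * (fderiv ℝ Φ (x₁, x₂, η x₁ x₂) (1, 0, 0) ^ 2
                  + fderiv ℝ Φ (x₁, x₂, η x₁ x₂) (0, 1, 0) ^ 2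
                  + fderiv ℝ Φ (x₁, x₂, η x₁ x₂) (0, 0, 1) ^ 2
                - 2 * fderiv ℝ Φ (x₁, x₂, η x₁ x₂) (0, 0, 1)
                  * (fderiv ℝ Φ (x₁, x₂, η x₁ x₂) (0, 0, 1)
                    - (eX1 η x₁ x₂ * fderiv ℝ Φ (x₁, x₂, η x₁ x₂) (1, 0, 0)
                      + eX2 η x₁ x₂ * fderiv ℝ Φ (x₁, x₂, η x₁ x₂) (0, 1, 0)))))
        - h / 2 * ∫ x₁ in (0:ℝ)..L₁, ∫ x₂ in (0:ℝ)..L₂, gradNormSq Φ (x₁, x₂, -h) := by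
  have hΦ' := hΦ.continuous_fderiv one_ne_zero
  have hηc : Continuous (uncurry η) := hη.continuous
  have hE₁ := continuous_eX1 hη
  have hE₂ := continuous_eX2 hη
  have hF : Continuous (gradNormSq Φ) := by unfold gradNormSq; fun_prop
  simp only [← intervalIntegral.integral_const_mul]
  rw [← intervalIntegral_integral_sub _ _ _ _ (by fun_prop) (by fun_prop),
    ← intervalIntegral_integral_sub _ _ _ _ (by fun_prop) (by fun_prop)]
  refine intervalIntegral.integral_congr fun x₁ hx₁ => intervalIntegral.integral_congr
    fun x₂ hx₂ => ?_
  rw [uIcc_of_le hL₁] at hx₁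
  rw [uIcc_of_le hL₂] at hx₂
  simp only [pohozaevField_flux_graph, pohozaevField_snd_snd_of_fderiv_eq_zero (hbot x₁ hx₁ x₂ hx₂)]
  ring

end Rectangle

theorem pohozaev_3d_general
    (L₁ L₂ h : ℝ) (hL₁ : 0 < L₁) (hL₂ : 0 < L₂) (hh : 0 < h)
    (η : ℝ → ℝ → ℝ) (ϕ : ℝ → ℝ → ℝ → ℝ)
    (hη : ContDiff ℝ 2 (fun p : ℝ × ℝ => η p.1 p.2))
    (hϕ : ContDiff ℝ 2 (fun p : ℝ × ℝ × ℝ => ϕ p.1 p.2.1 p.2.2))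
    (hηb : ∀ x₁ ∈ Icc (0:ℝ) L₁, ∀ x₂ ∈ Icc (0:ℝ) L₂, -h / 2 ≤ η x₁ x₂)
    (hlap : ∀ x₁ ∈ Icc (0:ℝ) L₁, ∀ x₂ ∈ Icc (0:ℝ) L₂, ∀ y ∈ Icc (-h) (η x₁ x₂),
      deriv (fun s => pX1 ϕ s x₂ y) x₁ + deriv (fun s => pX2 ϕ x₁ s y) x₂
        + deriv (fun s => pY ϕ x₁ x₂ s) y = 0)
    (hbc1 : ∀ x₁ ∈ ({0, L₁} : Set ℝ), ∀ x₂ ∈ Icc (0:ℝ) L₂, ∀ y ∈ Icc (-h) (η x₁ x₂),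
      pX1 ϕ x₁ x₂ y = 0)
    (hbc2 : ∀ x₂ ∈ ({0, L₂} : Set ℝ), ∀ x₁ ∈ Icc (0:ℝ) L₁, ∀ y ∈ Icc (-h) (η x₁ x₂),
      pX2 ϕ x₁ x₂ y = 0)
    (hbot : ∀ x₁ ∈ Icc (0:ℝ) L₁, ∀ x₂ ∈ Icc (0:ℝ) L₂, pY ϕ x₁ x₂ (-h) = 0) :
    (∫ x₁ in (0:ℝ)..L₁, ∫ x₂ in (0:ℝ)..L₂,
        (pY ϕ x₁ x₂ (η x₁ x₂)
            - (eX1 η x₁ x₂ * pX1 ϕ x₁ x₂ (η x₁ x₂)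
                + eX2 η x₁ x₂ * pX2 ϕ x₁ x₂ (η x₁ x₂)))
          * (x₁ * deriv (fun s => ϕ s x₂ (η s x₂)) x₁
              + x₂ * deriv (fun s => ϕ x₁ s (η x₁ s)) x₂))
      = 1 / 2 * (L₁ * (∫ x₂ in (0:ℝ)..L₂, ∫ y in (-h)..(η L₁ x₂), gradSq ϕ L₁ x₂ y)
            + L₂ * (∫ x₁ in (0:ℝ)..L₁, ∫ y in (-h)..(η x₁ L₂), gradSq ϕ x₁ L₂ y)
            + h * ∫ x₁ in (0:ℝ)..L₁, ∫ x₂ in (0:ℝ)..L₂, gradSq ϕ x₁ x₂ (-h))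
        - 1 / 2 * (∫ x₁ in (0:ℝ)..L₁, ∫ x₂ in (0:ℝ)..L₂, ∫ y in (-h)..(η x₁ x₂),
            gradSq ϕ x₁ x₂ y)
        + 1 / 2 * ∫ x₁ in (0:ℝ)..L₁, ∫ x₂ in (0:ℝ)..L₂,
            (η x₁ x₂ - (x₁ * eX1 η x₁ x₂ + x₂ * eX2 η x₁ x₂))
              * ((pX1 ϕ x₁ x₂ (η x₁ x₂)) ^ 2 + (pX2 ϕ x₁ x₂ (η x₁ x₂)) ^ 2
                  + (pY ϕ x₁ x₂ (η x₁ x₂)) ^ 2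
                  - 2 * pY ϕ x₁ x₂ (η x₁ x₂)
                      * (pY ϕ x₁ x₂ (η x₁ x₂)
                          - (eX1 η x₁ x₂ * pX1 ϕ x₁ x₂ (η x₁ x₂)
                              + eX2 η x₁ x₂ * pX2 ϕ x₁ x₂ (η x₁ x₂)))) := by
  have hϕd := hϕ.differentiable (by norm_num)
  have hηd : Differentiable ℝ (uncurry η) := hη.differentiable (by norm_num)
  simp only [pX1_eq_fderiv _ _ _ hϕd, pX2_eq_fderiv _ _ _ hϕd, pY_eq_fderiv _ _ _ hϕd,
    deriv_fderiv_slice₁ hϕ, deriv_fderiv_slice₂ hϕ, deriv_fderiv_slice₃ hϕ,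
    deriv_comp_graph_fst _ _ hϕd hηd, deriv_comp_graph_snd _ _ hϕd hηd,
    gradSq_eq_gradNormSq _ _ _ hϕd] at hlap hbc1 hbc2 hbot ⊢
  have hηh : ∀ x₁ ∈ Icc 0 L₁, ∀ x₂ ∈ Icc 0 L₂, -h ≤ η x₁ x₂ :=
    fun x₁ hx₁ x₂ hx₂ => by linarith [hηb x₁ hx₁ x₂ hx₂]
  have key := integral_divergence_under_graph (contDiff_pohozaevField hϕ) (hη.of_le one_le_two)
    (-h) 0 L₁ 0 L₂
  rw [integral_divergence_pohozaevField_of_harmonic hL₁.le hL₂.le hϕ hηh hlap,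
    integral_pohozaevField_faces_fst hL₁.le hL₂.le hηh hbc1,
    integral_pohozaevField_faces_snd hL₁.le hL₂.le hηh hbc2,
    integral_pohozaevField_top_sub_bottom hL₁.le hL₂.le (hϕ.of_le one_le_two)
      (hη.of_le one_le_two) hbot] at key
  linarith

/-- Pohozaev identity for the Dirichlet-to-Neumann operator,
three-dimensional (two-dimensional surface) static case, in the rectangle
`Q = [0,L₁] × [0,L₂]`.  Here `ψ(x) = ϕ(x,η(x))`,
`G(η)ψ = ∂_yϕ - ∇η·∇ₓϕ` at the surface, `B = ∂_yϕ|_{y=η}`, `V = ∇ₓϕ|_{y=η}`. -/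
theorem pohozaev_3d
    (L₁ L₂ h : ℝ) (hL₁ : 0 < L₁) (hL₂ : 0 < L₂) (hh : 0 < h)
    (η : ℝ → ℝ → ℝ) (ϕ : ℝ → ℝ → ℝ → ℝ)
    (hη : ContDiff ℝ 2 (fun p : ℝ × ℝ => η p.1 p.2))
    (hϕ : ContDiff ℝ 2 (fun p : ℝ × ℝ × ℝ => ϕ p.1 p.2.1 p.2.2))
    (hηb : ∀ x₁ ∈ Icc (0:ℝ) L₁, ∀ x₂ ∈ Icc (0:ℝ) L₂, -h / 2 ≤ η x₁ x₂)
    (hη1 : ∀ x₁ ∈ ({0, L₁} : Set ℝ), ∀ x₂ ∈ Icc (0:ℝ) L₂, eX1 η x₁ x₂ = 0)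
    (hη2 : ∀ x₂ ∈ ({0, L₂} : Set ℝ), ∀ x₁ ∈ Icc (0:ℝ) L₁, eX2 η x₁ x₂ = 0)
    (hlap : ∀ x₁ ∈ Icc (0:ℝ) L₁, ∀ x₂ ∈ Icc (0:ℝ) L₂, ∀ y ∈ Icc (-h) (η x₁ x₂),
      deriv (fun s => pX1 ϕ s x₂ y) x₁ + deriv (fun s => pX2 ϕ x₁ s y) x₂
        + deriv (fun s => pY ϕ x₁ x₂ s) y = 0)
    (hbc1 : ∀ x₁ ∈ ({0, L₁} : Set ℝ), ∀ x₂ ∈ Icc (0:ℝ) L₂, ∀ y ∈ Icc (-h) (η x₁ x₂),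
      pX1 ϕ x₁ x₂ y = 0)
    (hbc2 : ∀ x₂ ∈ ({0, L₂} : Set ℝ), ∀ x₁ ∈ Icc (0:ℝ) L₁, ∀ y ∈ Icc (-h) (η x₁ x₂),
      pX2 ϕ x₁ x₂ y = 0)
    (hbot : ∀ x₁ ∈ Icc (0:ℝ) L₁, ∀ x₂ ∈ Icc (0:ℝ) L₂, pY ϕ x₁ x₂ (-h) = 0) :
    (∫ x₁ in (0:ℝ)..L₁, ∫ x₂ in (0:ℝ)..L₂,
        (pY ϕ x₁ x₂ (η x₁ x₂)
            - (eX1 η x₁ x₂ * pX1 ϕ x₁ x₂ (η x₁ x₂)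
                + eX2 η x₁ x₂ * pX2 ϕ x₁ x₂ (η x₁ x₂)))
          * (x₁ * deriv (fun s => ϕ s x₂ (η s x₂)) x₁
              + x₂ * deriv (fun s => ϕ x₁ s (η x₁ s)) x₂))
      = 1 / 2 * (L₁ * (∫ x₂ in (0:ℝ)..L₂, ∫ y in (-h)..(η L₁ x₂), gradSq ϕ L₁ x₂ y)
            + L₂ * (∫ x₁ in (0:ℝ)..L₁, ∫ y in (-h)..(η x₁ L₂), gradSq ϕ x₁ L₂ y)
            + h * ∫ x₁ in (0:ℝ)..L₁, ∫ x₂ in (0:ℝ)..L₂, gradSq ϕ x₁ x₂ (-h))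
        - 1 / 2 * (∫ x₁ in (0:ℝ)..L₁, ∫ x₂ in (0:ℝ)..L₂, ∫ y in (-h)..(η x₁ x₂),
            gradSq ϕ x₁ x₂ y)
        + 1 / 2 * ∫ x₁ in (0:ℝ)..L₁, ∫ x₂ in (0:ℝ)..L₂,
            (η x₁ x₂ - (x₁ * eX1 η x₁ x₂ + x₂ * eX2 η x₁ x₂))
              * ((pX1 ϕ x₁ x₂ (η x₁ x₂)) ^ 2 + (pX2 ϕ x₁ x₂ (η x₁ x₂)) ^ 2
                  + (pY ϕ x₁ x₂ (η x₁ x₂)) ^ 2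
                  - 2 * pY ϕ x₁ x₂ (η x₁ x₂)
                      * (pY ϕ x₁ x₂ (η x₁ x₂)
                          - (eX1 η x₁ x₂ * pX1 ϕ x₁ x₂ (η x₁ x₂)
                              + eX2 η x₁ x₂ * pX2 ϕ x₁ x₂ (η x₁ x₂)))) :=
  pohozaev_3d_general L₁ L₂ h hL₁ hL₂ hh η ϕ hη hϕ hηb hlap hbc1 hbc2 hbot
end
end
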